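/- arXiv:2002.07357 — 11 statements merged into one kernel-verified Lean document; each statement's English description precedes it below -/
import Mathlib

section
/- For an odd integer n = 2m+1 with m > 1 and the 2×n array A defined by a_{1,j} = n+j for j ∈ [1,m-1], a_{1,j} = n+j+1 for j ∈ [m,2m], a_{1,2m+1} = n; a_{2,j} = j for j ∈ [1,m], a_{2,m+1} = 3m+1, a_{2,j} = j-1 for j ∈ [m+2,2m+1], the set of column sums S₁ = {a_{1,j} + a_{2,j} : j ∈ [1,n]} together with the set of forward-diagonal sums S₂ = {a_{1,j} + a_{2,⟨j+1⟩} : j ∈ [1,n]} (indices taken cyclically mod n in [1,n]) satisfies S₁ ∪ S₂ = [n+1, 3n+1] \ {2n+1}. -/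
/-- `rep n a` is the representative of `a` modulo `n` lying in `{1,…,n}` (for `a ≥ 1`). -/
def rep (n a : ℕ) : ℕ := (a - 1) % n + 1

lemma rep_eq (n j : ℕ) (h : j < n) : rep n (j + 1) = j + 1 := by
  simp [rep, Nat.mod_eq_of_lt h]

lemma rep_self (n : ℕ) (h : 0 < n) : rep n (n + 1) = 1 := by
  simp [rep, Nat.mod_self]

theorem stmt_1 (m n : ℕ) (hm : 1 < m) (hn : n = 2 * m + 1)
    (a : ℕ → ℕ → ℕ)
    (h11 : ∀ j, 1 ≤ j → j ≤ m - 1 → a 1 j = n + j)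
    (h12 : ∀ j, m ≤ j → j ≤ 2 * m → a 1 j = n + j + 1)
    (h13 : a 1 (2 * m + 1) = n)
    (h21 : ∀ j, 1 ≤ j → j ≤ m → a 2 j = j)
    (h22 : a 2 (m + 1) = 3 * m + 1)
    (h23 : ∀ j, m + 2 ≤ j → j ≤ 2 * m + 1 → a 2 j = j - 1) :
    ((Finset.Icc 1 n).image fun j => a 1 j + a 2 j) ∪
      ((Finset.Icc 1 n).image fun j => a 1 j + a 2 (rep n (j + 1))) =
      Finset.Icc (n + 1) (3 * n + 1) \ {2 * n + 1} := by
  subst hn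
  ext x
  simp only [Finset.mem_union, Finset.mem_image, Finset.mem_Icc, Finset.mem_sdiff,
    Finset.mem_singleton]
  constructor
  · rintro (⟨j, hj, rfl⟩ | ⟨j, hj, rfl⟩)
    · -- column sums
      by_cases c1 : j ≤ m - 1
      · rw [h11 j hj.1 c1, h21 j hj.1 (by omega)]; omega
      · by_cases c2 : j = m
        · rw [c2, h12 m le_rfl (by omega), h21 m (by omega) le_rfl]; omega
        · by_cases c3 : j = m + 1
          · rw [c3, h12 (m + 1) (by omega) (by omega), h22]; omega
          · by_cases c4 : j ≤ 2 * m
            · rw [h12 j (by omega) c4, h23 j (by omega) (by omega)]; omega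
            · have hj' : j = 2 * m + 1 := by omega
              subst hj'; rw [h13, h23 (2 * m + 1) (by omega) le_rfl]; omega
    · -- diagonal sums
      by_cases c0 : j = 2 * m + 1
      · subst c0
        rw [rep_self _ (by omega), h13, h21 1 le_rfl (by omega)]; omega
      · rw [rep_eq _ j (by omega)]
        by_cases c1 : j ≤ m - 1
        · rw [h11 j hj.1 c1, h21 (j + 1) (by omega) (by omega)]; omega
        · by_cases c2 : j = m
          · rw [c2, h12 m le_rfl (by omega), h22]; omega
          · -- m+1 ≤ j ≤ 2m
            rw [h12 j (by omega) (by omega), h23 (j + 1) (by omega) (by omega)]; omega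
  · rintro ⟨⟨h1, h2⟩, h3⟩
    rcases Nat.even_or_odd x with ⟨k, hk⟩ | ⟨k, hk⟩
    · -- x = 2k (even): x = n + 2j + 1 with j = k - m - 1
      by_cases c1 : k = m + 1
      · exact Or.inr ⟨2 * m + 1, ⟨by omega, le_rfl⟩, by
          rw [rep_self _ (by omega), h13, h21 1 le_rfl (by omega)]; omega⟩
      · by_cases c2 : k ≤ 2 * m
        · exact Or.inr ⟨k - m - 1, ⟨by omega, by omega⟩, by
            rw [rep_eq _ (k - m - 1) (by omega), h11 (k - m - 1) (by omega) (by omega),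
              h21 (k - m - 1 + 1) (by omega) (by omega)]; omega⟩
        · by_cases c3 : k = 2 * m + 1
          · exact Or.inl ⟨m, ⟨by omega, by omega⟩, by
              rw [h12 m le_rfl (by omega), h21 m (by omega) le_rfl]; omega⟩
          · by_cases c4 : k ≤ 3 * m + 1
            · exact Or.inr ⟨k - m - 1, ⟨by omega, by omega⟩, by
                rw [rep_eq _ (k - m - 1) (by omega), h12 (k - m - 1) (by omega) (by omega),
                  h23 (k - m - 1 + 1) (by omega) (by omega)]; omega⟩
            · -- k = 3m + 2, x = 3n + 1
              exact Or.inl ⟨m + 1, ⟨by omega, by omega⟩, by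
                rw [h12 (m + 1) (by omega) (by omega), h22]; omega⟩
    · -- x = 2k + 1 (odd): x = n + 2j with j = k - m
      by_cases c1 : k ≤ 2 * m - 1
      · exact Or.inl ⟨k - m, ⟨by omega, by omega⟩, by
          rw [h11 (k - m) (by omega) (by omega), h21 (k - m) (by omega) (by omega)]; omega⟩
      · by_cases c2 : k = 2 * m
        · exact Or.inl ⟨2 * m + 1, ⟨by omega, le_rfl⟩, by
            rw [h13, h23 (2 * m + 1) (by omega) le_rfl]; omega⟩
        · by_cases c3 : k ≤ 3 * m
          · -- k ∈ [2m+2, 3m], j = k - m ∈ [m+2, 2m]  (k = 2m+1 excluded by h3)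
            exact Or.inl ⟨k - m, ⟨by omega, by omega⟩, by
              rw [h12 (k - m) (by omega) (by omega), h23 (k - m) (by omega) (by omega)]; omega⟩
          · -- k = 3m + 1, x = 3n
            exact Or.inr ⟨m, ⟨by omega, by omega⟩, by
              rw [rep_eq _ m (by omega), h12 m le_rfl (by omega), h22]; omega⟩
end

section
/- For any positive integer n, the n×n array B with b_{i,j} = ⟨2i + j - 1⟩_n satisfies b_{i,j} + b_{n+1-i, n+1-j} = n + 1 for all i, j ∈ {1,...,n}. -/
lemma aux_mod (n x : ℕ) (hn : 0 < n) (hx : x < 3 * n) :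
    x % n + (3 * n - 1 - x) % n = n - 1 := by
  have hdm := Nat.div_add_mod x n
  have hrlt := Nat.mod_lt x hn
  have hq : x / n < 3 := by
    rw [Nat.div_lt_iff_lt_mul hn]; omega
  set q := x / n with hqdef
  set r := x % n with hrdef
  clear_value q r
  have hrew : 3 * n - 1 - x = (n - 1 - r) + (2 - q) * n := by
    interval_cases q <;> omega
  rw [hrew, Nat.add_mul_mod_self_right, Nat.mod_eq_of_lt (by omega)]
  omega

theorem stmt_3 (n : ℕ) (hn : 0 < n) :
    ∀ i ∈ Finset.Icc 1 n, ∀ j ∈ Finset.Icc 1 n,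
      rep n (2 * i + j - 1) + rep n (2 * (n + 1 - i) + (n + 1 - j) - 1) = n + 1 := by
  intro i hi j hj
  simp only [Finset.mem_Icc] at hi hj
  unfold rep
  have hy : 2 * (n + 1 - i) + (n + 1 - j) - 1 - 1 = 3 * n - 1 - (2 * i + j - 1 - 1) := by
    omega
  rw [hy]
  have h := aux_mod n (2 * i + j - 1 - 1) hn (by omega)
  omega
end

section
/- Let n ≥ 3 be odd. Define a 3×n array A₃ by a_{1,j} = n - (j-1)/2 if j is odd, a_{1,j} = (n+1-j)/2 if j is even; a_{2,j} = j; and a_{3,j} = n + 1 - a_{1,n+1-j}. Then A₃ is a symmetric diagonal Kotzig array: each row is a permutation of {1,...,n}, all column sums equal 3(n+1)/2, all forward diagonal sums (sums a_{1,j} + a_{2,⟨j+1⟩_n} + a_{3,⟨j+2⟩_n}) equal 3(n+1)/2, and a_{i,j} + a_{4-i, n+1-j} = n + 1 for all i ∈ {1,2,3}, j ∈ {1,...,n}. -/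
theorem stmt_4 (n : ℕ) (hn : 3 ≤ n) (hodd : Odd n)
    (a : ℕ → ℕ → ℕ)
    (h1o : ∀ j ∈ Finset.Icc 1 n, Odd j → a 1 j = n - (j - 1) / 2)
    (h1e : ∀ j ∈ Finset.Icc 1 n, Even j → a 1 j = (n + 1 - j) / 2)
    (h2 : ∀ j ∈ Finset.Icc 1 n, a 2 j = j)
    (h3 : ∀ j ∈ Finset.Icc 1 n, a 3 j = n + 1 - a 1 (n + 1 - j)) :
    (∀ i ∈ Finset.Icc 1 3, (Finset.Icc 1 n).image (a i) = Finset.Icc 1 n) ∧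
    (∀ j ∈ Finset.Icc 1 n, a 1 j + a 2 j + a 3 j = 3 * (n + 1) / 2) ∧
    (∀ j ∈ Finset.Icc 1 n,
      a 1 j + a 2 (rep n (j + 1)) + a 3 (rep n (j + 2)) = 3 * (n + 1) / 2) ∧
    (∀ i ∈ Finset.Icc 1 3, ∀ j ∈ Finset.Icc 1 n, a i j + a (4 - i) (n + 1 - j) = n + 1) := by
  obtain ⟨m, hm⟩ := hodd
  simp only [Finset.mem_Icc] at h1o h1e h2 h3
  -- explicit form of row 1
  have H1 : ∀ j, 1 ≤ j → j ≤ n →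
      a 1 j = if j % 2 = 1 then n - (j - 1) / 2 else (n + 1 - j) / 2 := by
    intro j hj1 hj2
    rcases Nat.even_or_odd j with he | ho
    · rw [h1e j ⟨hj1, hj2⟩ he]
      have : j % 2 = 0 := Nat.even_iff.mp he
      simp [this]
    · rw [h1o j ⟨hj1, hj2⟩ ho]
      simp [Nat.odd_iff.mp ho]
  -- bounds for row 1
  have Hb : ∀ j, 1 ≤ j → j ≤ n → 1 ≤ a 1 j ∧ a 1 j ≤ n := by
    intro j hj1 hj2
    rw [H1 j hj1 hj2]
    split_ifs with h <;> omega
  -- surjectivity of row 1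
  have S1 : ∀ v, 1 ≤ v → v ≤ n → ∃ j, 1 ≤ j ∧ j ≤ n ∧ a 1 j = v := by
    intro v hv1 hv2
    by_cases hv : m + 1 ≤ v
    · refine ⟨2 * (n - v) + 1, by omega, by omega, ?_⟩
      rw [H1 _ (by omega) (by omega)]
      split_ifs with h <;> omega
    · refine ⟨n + 1 - 2 * v, by omega, by omega, ?_⟩
      rw [H1 _ (by omega) (by omega)]
      split_ifs with h <;> omega
  -- explicit form & bounds for row 3
  have H3 : ∀ j, 1 ≤ j → j ≤ n → a 3 j = n + 1 - a 1 (n + 1 - j) :=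
    fun j hj1 hj2 => h3 j ⟨hj1, hj2⟩
  have Hb3 : ∀ j, 1 ≤ j → j ≤ n → 1 ≤ a 3 j ∧ a 3 j ≤ n := by
    intro j hj1 hj2
    rw [H3 j hj1 hj2]
    have := Hb (n + 1 - j) (by omega) (by omega)
    omega
  refine ⟨?_, ?_, ?_, ?_⟩
  · -- rows are permutations
    intro i hi
    simp only [Finset.mem_Icc] at hi
    obtain ⟨hi1, hi2⟩ := hi
    ext v
    simp only [Finset.mem_image, Finset.mem_Icc]
    interval_cases i
    · constructor
      · rintro ⟨j, ⟨hj1, hj2⟩, rfl⟩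
        exact Hb j hj1 hj2
      · rintro ⟨hv1, hv2⟩
        obtain ⟨j, hj1, hj2, hj3⟩ := S1 v hv1 hv2
        exact ⟨j, ⟨hj1, hj2⟩, hj3⟩
    · constructor
      · rintro ⟨j, ⟨hj1, hj2⟩, rfl⟩
        rw [h2 j ⟨hj1, hj2⟩]; exact ⟨hj1, hj2⟩
      · rintro ⟨hv1, hv2⟩
        exact ⟨v, ⟨hv1, hv2⟩, h2 v ⟨hv1, hv2⟩⟩
    · constructor
      · rintro ⟨j, ⟨hj1, hj2⟩, rfl⟩
        exact Hb3 j hj1 hj2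
      · rintro ⟨hv1, hv2⟩
        obtain ⟨j, hj1, hj2, hj3⟩ := S1 (n + 1 - v) (by omega) (by omega)
        refine ⟨n + 1 - j, ⟨by omega, by omega⟩, ?_⟩
        rw [H3 _ (by omega) (by omega)]
        have hjj : n + 1 - (n + 1 - j) = j := by omega
        rw [hjj, hj3]
        omega
  · -- column sums
    intro j hj
    simp only [Finset.mem_Icc] at hj
    obtain ⟨hj1, hj2⟩ := hj
    rw [h2 j ⟨hj1, hj2⟩, H3 j hj1 hj2, H1 j hj1 hj2,
      H1 (n + 1 - j) (by omega) (by omega)]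
    split_ifs with h h' h' <;> omega
  · -- diagonal sums
    intro j hj
    simp only [Finset.mem_Icc] at hj
    obtain ⟨hj1, hj2⟩ := hj
    rcases Nat.lt_or_ge (j + 2) (n + 1) with hlt | hge
    · have r1 : rep n (j + 1) = j + 1 := by
        simp [rep, Nat.mod_eq_of_lt (show j < n by omega)]
      have r2 : rep n (j + 2) = j + 2 := by
        simp [rep, Nat.mod_eq_of_lt (show j + 1 < n by omega)]
      rw [r1, r2, h2 (j + 1) ⟨by omega, by omega⟩, H3 (j + 2) (by omega) (by omega),
        H1 j hj1 hj2, H1 (n + 1 - (j + 2)) (by omega) (by omega)]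
      split_ifs with h h' h' <;> omega
    · rcases Nat.lt_or_ge j n with hj' | hj'
      · -- j + 1 = n
        have hjn : j + 1 = n := by omega
        have r1 : rep n (j + 1) = n := by
          unfold rep
          rw [show j + 1 - 1 = j from rfl, Nat.mod_eq_of_lt hj']
          omega
        have r2 : rep n (j + 2) = 1 := by
          unfold rep
          rw [show j + 2 - 1 = n by omega, Nat.mod_self]
        rw [r1, r2, h2 n ⟨by omega, by omega⟩, H3 1 (by omega) (by omega),
          H1 j hj1 hj2, H1 (n + 1 - 1) (by omega) (by omega)]
        split_ifs with h h' h' <;> omega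
      · -- j = n
        have hjn : j = n := by omega
        have r1 : rep n (j + 1) = 1 := by
          unfold rep
          rw [show j + 1 - 1 = j from rfl, hjn, Nat.mod_self]
        have r2 : rep n (j + 2) = 2 := by
          unfold rep
          rw [show j + 2 - 1 = n + 1 by omega, Nat.add_mod_left,
            Nat.mod_eq_of_lt (by omega : 1 < n)]
        rw [r1, r2, h2 1 ⟨by omega, by omega⟩, H3 2 (by omega) (by omega),
          H1 j hj1 hj2, H1 (n + 1 - 2) (by omega) (by omega)]
        split_ifs with h h' h' <;> omega
  · -- symmetry
    intro i hi j hj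
    simp only [Finset.mem_Icc] at hi hj
    obtain ⟨hi1, hi2⟩ := hi
    obtain ⟨hj1, hj2⟩ := hj
    interval_cases i
    · rw [show (4 : ℕ) - 1 = 3 from rfl, H3 (n + 1 - j) (by omega) (by omega),
        show n + 1 - (n + 1 - j) = j by omega]
      have := Hb j hj1 hj2
      omega
    · rw [show (4 : ℕ) - 2 = 2 from rfl, h2 j ⟨hj1, hj2⟩,
        h2 (n + 1 - j) ⟨by omega, by omega⟩]
      omega
    · rw [show (4 : ℕ) - 3 = 1 from rfl, H3 j hj1 hj2]
      have := Hb (n + 1 - j) (by omega) (by omega)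
      omega
end

section
/- Let n ≥ 3 be odd. Define a 5×n array A₅ by c_{1,j} = ((n+1)/2·(j-1) mod n) + 1, c_{2,j} = n+1-j, c_{3,j} = j, c_{4,j} = n+1-j, c_{5,j} = j + (n+1)/2 - c_{1,j}. Then A₅ is a symmetric diagonal Kotzig array of order 5×n: each row is a permutation of {1,...,n}, all column sums are equal, all forward diagonal sums are equal, and c_{i,j} + c_{6-i,n+1-j} = n+1 for all i ∈ {1,...,5}, j ∈ {1,...,n}. -/
lemma key (n m w : ℕ) (hn : 0 < n) (hm : 2 * m = n + 1) :
    2 * ((m * w) % n) = w % n ∨ 2 * ((m * w) % n) = w % n + n := by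
  have h1 : (2 * ((m * w) % n)) % n = w % n := by
    have h2 : 2 * (m * w) % n = w % n := by
      have : 2 * (m * w) = w + w * n := by
        calc 2 * (m * w) = (2 * m) * w := by ring
        _ = (n + 1) * w := by rw [hm]
        _ = w + w * n := by ring
      rw [this, Nat.add_mul_mod_self_right]
    calc (2 * ((m * w) % n)) % n = (2 % n * ((m * w) % n)) % n := by
          rw [Nat.mul_mod, Nat.mod_mod_of_dvd _ dvd_rfl]
      _ = 2 * (m * w) % n := by rw [← Nat.mul_mod]
      _ = w % n := h2
  have hlt : (m * w) % n < n := Nat.mod_lt _ hn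
  have hd := Nat.div_add_mod (2 * ((m * w) % n)) n
  have hq : 2 * ((m * w) % n) / n < 2 := Nat.div_lt_of_lt_mul (by omega)
  rw [h1] at hd
  interval_cases h : (2 * ((m * w) % n)) / n <;> omega

lemma modlt2 (n w : ℕ) (hw : w < 2 * n) : w % n = w ∨ w % n + n = w := by
  rcases lt_or_ge w n with h | h
  · left; exact Nat.mod_eq_of_lt h
  · right
    rw [Nat.mod_eq_sub_mod h, Nat.mod_eq_of_lt (by omega)]
    omega

lemma keyL (n m j : ℕ) (hn : 3 ≤ n) (hm : 2 * m = n + 1) (hj1 : 1 ≤ j) (hjn : j ≤ n) :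
    (m * (j - 1)) % n + (m * (j + n - 2)) % n + 2 = j + m := by
  have k1 := key n m (j - 1) (by omega) hm
  rw [Nat.mod_eq_of_lt (show j - 1 < n by omega)] at k1
  have k2 := key n m (j + n - 2) (by omega) hm
  have l2 := modlt2 n (j + n - 2) (by omega)
  have b1 : (m * (j - 1)) % n < n := Nat.mod_lt _ (by omega)
  have b2 : (m * (j + n - 2)) % n < n := Nat.mod_lt _ (by omega)
  omega

lemma keyD (n m j : ℕ) (hn : 3 ≤ n) (hm : 2 * m = n + 1) (hj1 : 1 ≤ j) (hjn : j ≤ n) :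
    (m * (j - 1)) % n + (m * (j + 2)) % n + (j + 1) % n + 1 = m + j % n + (j + 2) % n := by
  have k1 := key n m (j - 1) (by omega) hm
  rw [Nat.mod_eq_of_lt (show j - 1 < n by omega)] at k1
  have k2 := key n m (j + 2) (by omega) hm
  have l0 := modlt2 n j (by omega)
  have l1 := modlt2 n (j + 1) (by omega)
  have l2 := modlt2 n (j + 2) (by omega)
  have b1 : (m * (j - 1)) % n < n := Nat.mod_lt _ (by omega)
  have b2 : (m * (j + 2)) % n < n := Nat.mod_lt _ (by omega)
  have b3 : j % n < n := Nat.mod_lt _ (by omega)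
  have b4 : (j + 1) % n < n := Nat.mod_lt _ (by omega)
  have b5 : (j + 2) % n < n := Nat.mod_lt _ (by omega)
  omega

lemma keyS1 (n m j : ℕ) (hn : 3 ≤ n) (hm : 2 * m = n + 1) (hj1 : 1 ≤ j) (hjn : j ≤ n) :
    (m * (j - 1)) % n + (m * (2 * n - 1 - j)) % n = n - 1 := by
  have k1 := key n m (j - 1) (by omega) hm
  rw [Nat.mod_eq_of_lt (show j - 1 < n by omega)] at k1
  have k2 := key n m (2 * n - 1 - j) (by omega) hm
  have l2 := modlt2 n (2 * n - 1 - j) (by omega)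
  have b1 : (m * (j - 1)) % n < n := Nat.mod_lt _ (by omega)
  have b2 : (m * (2 * n - 1 - j)) % n < n := Nat.mod_lt _ (by omega)
  omega

lemma keyS5 (n m j : ℕ) (hn : 3 ≤ n) (hm : 2 * m = n + 1) (hj1 : 1 ≤ j) (hjn : j ≤ n) :
    (m * (j + n - 2)) % n + (m * (n - j)) % n = n - 1 := by
  have k1 := key n m (j + n - 2) (by omega) hm
  have l1 := modlt2 n (j + n - 2) (by omega)
  have k2 := key n m (n - j) (by omega) hm
  rw [Nat.mod_eq_of_lt (show n - j < n by omega)] at k2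
  have b1 : (m * (j + n - 2)) % n < n := Nat.mod_lt _ (by omega)
  have b2 : (m * (n - j)) % n < n := Nat.mod_lt _ (by omega)
  omega

theorem stmt_5 (n : ℕ) (hn : 3 ≤ n) (hodd : Odd n)
    (c : ℕ → ℕ → ℕ)
    (h1 : ∀ j ∈ Finset.Icc 1 n, c 1 j = ((n + 1) / 2 * (j - 1)) % n + 1)
    (h2 : ∀ j ∈ Finset.Icc 1 n, c 2 j = n + 1 - j)
    (h3 : ∀ j ∈ Finset.Icc 1 n, c 3 j = j)
    (h4 : ∀ j ∈ Finset.Icc 1 n, c 4 j = n + 1 - j)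
    (h5 : ∀ j ∈ Finset.Icc 1 n, c 5 j = j + (n + 1) / 2 - c 1 j) :
    (∀ i ∈ Finset.Icc 1 5, (Finset.Icc 1 n).image (c i) = Finset.Icc 1 n) ∧
    (∃ k, ∀ j ∈ Finset.Icc 1 n, ∑ i ∈ Finset.Icc 1 5, c i j = k) ∧
    (∃ k, ∀ j ∈ Finset.Icc 1 n, ∑ i ∈ Finset.Icc 1 5, c i (rep n (j + i - 1)) = k) ∧
    (∀ i ∈ Finset.Icc 1 5, ∀ j ∈ Finset.Icc 1 n, c i j + c (6 - i) (n + 1 - j) = n + 1) := by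
  obtain ⟨t, ht⟩ := hodd
  set M := (n + 1) / 2 with hM
  have hm : 2 * M = n + 1 := by omega
  have hn0 : 0 < n := by omega
  have hc1 : ∀ j, 1 ≤ j → j ≤ n → c 1 j = (M * (j - 1)) % n + 1 := fun j a b =>
    h1 j (Finset.mem_Icc.mpr ⟨a, b⟩)
  have hc5 : ∀ j, 1 ≤ j → j ≤ n → c 5 j = (M * (j + n - 2)) % n + 1 := by
    intro j a b
    have hL := keyL n M j hn hm a b
    rw [h5 j (Finset.mem_Icc.mpr ⟨a, b⟩), hc1 j a b]
    omega
  have hsum : (Finset.Icc 1 5 : Finset ℕ) = {1, 2, 3, 4, 5} := by decide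
  refine ⟨?_, ⟨M + 2 * n + 2, ?_⟩, ⟨M + 2 * n + 2, ?_⟩, ?_⟩
  · -- rows are permutations
    intro i hi
    obtain ⟨hi1, hi2⟩ := Finset.mem_Icc.mp hi
    interval_cases i
    · -- row 1
      apply Finset.eq_of_subset_of_card_le
      · intro x hx
        rw [Finset.mem_image] at hx
        obtain ⟨j, hj, rfl⟩ := hx
        rw [Finset.mem_Icc] at hj ⊢
        rw [hc1 j hj.1 hj.2]
        have : (M * (j - 1)) % n < n := Nat.mod_lt _ hn0
        omega
      · have hinj : Set.InjOn (c 1) (Finset.Icc 1 n : Finset ℕ) := by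
          intro j hj j' hj' he
          simp only [Finset.coe_Icc, Set.mem_Icc] at hj hj'
          rw [hc1 j hj.1 hj.2, hc1 j' hj'.1 hj'.2] at he
          have k1 := key n M (j - 1) hn0 hm
          rw [Nat.mod_eq_of_lt (show j - 1 < n by omega)] at k1
          have k2 := key n M (j' - 1) hn0 hm
          rw [Nat.mod_eq_of_lt (show j' - 1 < n by omega)] at k2
          omega
        rw [Finset.card_image_of_injOn hinj]
    · -- row 2
      ext x
      simp only [Finset.mem_image, Finset.mem_Icc]
      constructor
      · rintro ⟨j, hj, rfl⟩
        rw [h2 j (Finset.mem_Icc.mpr hj)]; omega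
      · intro hx
        exact ⟨n + 1 - x, by omega, by
          rw [h2 (n + 1 - x) (Finset.mem_Icc.mpr (by omega))]; omega⟩
    · -- row 3
      ext x
      simp only [Finset.mem_image, Finset.mem_Icc]
      constructor
      · rintro ⟨j, hj, rfl⟩
        rw [h3 j (Finset.mem_Icc.mpr hj)]; omega
      · intro hx
        exact ⟨x, hx, by rw [h3 x (Finset.mem_Icc.mpr hx)]⟩
    · -- row 4
      ext x
      simp only [Finset.mem_image, Finset.mem_Icc]
      constructor
      · rintro ⟨j, hj, rfl⟩
        rw [h4 j (Finset.mem_Icc.mpr hj)]; omega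
      · intro hx
        exact ⟨n + 1 - x, by omega, by
          rw [h4 (n + 1 - x) (Finset.mem_Icc.mpr (by omega))]; omega⟩
    · -- row 5
      apply Finset.eq_of_subset_of_card_le
      · intro x hx
        rw [Finset.mem_image] at hx
        obtain ⟨j, hj, rfl⟩ := hx
        rw [Finset.mem_Icc] at hj ⊢
        rw [hc5 j hj.1 hj.2]
        have : (M * (j + n - 2)) % n < n := Nat.mod_lt _ hn0
        omega
      · have hinj : Set.InjOn (c 5) (Finset.Icc 1 n : Finset ℕ) := by
          intro j hj j' hj' he
          simp only [Finset.coe_Icc, Set.mem_Icc] at hj hj'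
          rw [hc5 j hj.1 hj.2, hc5 j' hj'.1 hj'.2] at he
          have k1 := key n M (j + n - 2) hn0 hm
          have l1 := modlt2 n (j + n - 2) (by omega)
          have k2 := key n M (j' + n - 2) hn0 hm
          have l2 := modlt2 n (j' + n - 2) (by omega)
          have b1 : (M * (j + n - 2)) % n < n := Nat.mod_lt _ hn0
          have b2 : (M * (j' + n - 2)) % n < n := Nat.mod_lt _ hn0
          omega
        rw [Finset.card_image_of_injOn hinj]
  · -- column sums
    intro j hj
    rw [Finset.mem_Icc] at hj
    rw [hsum, Finset.sum_insert (by decide), Finset.sum_insert (by decide),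
      Finset.sum_insert (by decide), Finset.sum_insert (by decide), Finset.sum_singleton]
    rw [hc1 j hj.1 hj.2, h2 j (Finset.mem_Icc.mpr hj), h3 j (Finset.mem_Icc.mpr hj),
      h4 j (Finset.mem_Icc.mpr hj), hc5 j hj.1 hj.2]
    have hL := keyL n M j hn hm hj.1 hj.2
    omega
  · -- diagonal sums
    intro j hj
    rw [Finset.mem_Icc] at hj
    rw [hsum, Finset.sum_insert (by decide), Finset.sum_insert (by decide),
      Finset.sum_insert (by decide), Finset.sum_insert (by decide), Finset.sum_singleton]
    have b0 : j % n < n := Nat.mod_lt _ hn0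
    have b1 : (j + 1) % n < n := Nat.mod_lt _ hn0
    have b2 : (j + 2) % n < n := Nat.mod_lt _ hn0
    have b3 : (j + 3) % n < n := Nat.mod_lt _ hn0
    have e1 : c 1 (rep n (j + 1 - 1)) = (M * (j - 1)) % n + 1 := by
      have hr : rep n (j + 1 - 1) = j := by
        unfold rep
        rw [Nat.mod_eq_of_lt (show j + 1 - 1 - 1 < n by omega)]
        omega
      rw [hr, hc1 j hj.1 hj.2]
    have e2 : c 2 (rep n (j + 2 - 1)) = n - j % n := by
      have hr : rep n (j + 2 - 1) = j % n + 1 := by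
        unfold rep; rw [show j + 2 - 1 - 1 = j from by omega]
      rw [hr, h2 _ (Finset.mem_Icc.mpr ⟨by omega, by omega⟩)]
      omega
    have e3 : c 3 (rep n (j + 3 - 1)) = (j + 1) % n + 1 := by
      have hr : rep n (j + 3 - 1) = (j + 1) % n + 1 := by
        unfold rep; rw [show j + 3 - 1 - 1 = j + 1 from by omega]
      rw [hr, h3 _ (Finset.mem_Icc.mpr ⟨by omega, by omega⟩)]
    have e4 : c 4 (rep n (j + 4 - 1)) = n - (j + 2) % n := by
      have hr : rep n (j + 4 - 1) = (j + 2) % n + 1 := by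
        unfold rep; rw [show j + 4 - 1 - 1 = j + 2 from by omega]
      rw [hr, h4 _ (Finset.mem_Icc.mpr ⟨by omega, by omega⟩)]
      omega
    have e5 : c 5 (rep n (j + 5 - 1)) = (M * (j + 2)) % n + 1 := by
      have hr : rep n (j + 5 - 1) = (j + 3) % n + 1 := by
        unfold rep; rw [show j + 5 - 1 - 1 = j + 3 from by omega]
      rw [hr, hc5 _ (by omega) (by omega)]
      congr 1
      rw [show (j + 3) % n + 1 + n - 2 = (j + 3) % n + (n - 1) from by omega]
      calc (M * ((j + 3) % n + (n - 1))) % n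
          = (M * ((j + 3) + (n - 1))) % n :=
            Nat.ModEq.mul_left M ((Nat.mod_modEq (j + 3) n).add_right (n - 1))
        _ = (M * (j + 2 + n)) % n := by rw [show j + 3 + (n - 1) = j + 2 + n from by omega]
        _ = (M * (j + 2) + M * n) % n := by ring_nf
        _ = (M * (j + 2)) % n := by rw [Nat.add_mul_mod_self_right]
    rw [e1, e2, e3, e4, e5]
    have hD := keyD n M j hn hm hj.1 hj.2
    omega
  · -- symmetry
    intro i hi j hj
    obtain ⟨hi1, hi2⟩ := Finset.mem_Icc.mp hi
    rw [Finset.mem_Icc] at hj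
    interval_cases i
    · show c 1 j + c 5 (n + 1 - j) = n + 1
      rw [hc1 j hj.1 hj.2, hc5 (n + 1 - j) (by omega) (by omega),
        show n + 1 - j + n - 2 = 2 * n - 1 - j from by omega]
      have hS := keyS1 n M j hn hm hj.1 hj.2
      omega
    · show c 2 j + c 4 (n + 1 - j) = n + 1
      rw [h2 j (Finset.mem_Icc.mpr hj), h4 (n + 1 - j) (Finset.mem_Icc.mpr ⟨by omega, by omega⟩)]
      omega
    · show c 3 j + c 3 (n + 1 - j) = n + 1
      rw [h3 j (Finset.mem_Icc.mpr hj), h3 (n + 1 - j) (Finset.mem_Icc.mpr ⟨by omega, by omega⟩)]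
      omega
    · show c 4 j + c 2 (n + 1 - j) = n + 1
      rw [h4 j (Finset.mem_Icc.mpr hj), h2 (n + 1 - j) (Finset.mem_Icc.mpr ⟨by omega, by omega⟩)]
      omega
    · show c 5 j + c 1 (n + 1 - j) = n + 1
      rw [hc5 j hj.1 hj.2, hc1 (n + 1 - j) (by omega) (by omega),
        show n + 1 - j - 1 = n - j from by omega]
      have hS := keyS5 n M j hn hm hj.1 hj.2
      omega
end

section
/- If A is a symmetric diagonal Kotzig array of order d×n and B is the d×n array with b_{i,j} = i - 1, then S = A + nB is a symmetric forward diagonals array SFD(d,n) over {1,...,dn}: its entries are exactly the integers 1 through dn, all column sums are equal, all forward diagonal sums are equal, and s_{i,j} + s_{d+1-i,n+1-j} is constant over all (i,j). -/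
/-- `a` (indexed by `{1,…,d} × {1,…,n}`) is a symmetric diagonal Kotzig array of order
`d × n`: each row is a permutation of `{1,…,n}`, all column sums are equal, all forward
diagonal sums are equal, and `a i j + a (d+1-i) (n+1-j) = n+1` for all `i, j`. -/
def IsSDKA (d n : ℕ) (a : ℕ → ℕ → ℕ) : Prop :=
  (∀ i ∈ Finset.Icc 1 d, (Finset.Icc 1 n).image (a i) = Finset.Icc 1 n) ∧
  (∃ k, ∀ j ∈ Finset.Icc 1 n, ∑ i ∈ Finset.Icc 1 d, a i j = k) ∧
  (∃ k, ∀ j ∈ Finset.Icc 1 n, ∑ i ∈ Finset.Icc 1 d, a i (rep n (j + i - 1)) = k) ∧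
  (∀ i ∈ Finset.Icc 1 d, ∀ j ∈ Finset.Icc 1 n, a i j + a (d + 1 - i) (n + 1 - j) = n + 1)
/-- `a` (indexed by `{1,…,t} × {1,…,n}`) is a symmetric forward diagonals array
SFD(t,n) over `[1+l, nt+l]`: its entries are exactly the consecutive integers
`1+l,…,nt+l`, all column sums are equal, all forward diagonal sums are equal, and
`a i j + a (t+1-i) (n+1-j)` is a constant. -/
def IsSFD (t n l : ℕ) (a : ℕ → ℕ → ℕ) : Prop :=
  ((Finset.Icc 1 t ×ˢ Finset.Icc 1 n).image fun p => a p.1 p.2) =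
      Finset.Icc (1 + l) (n * t + l) ∧
  (∃ k, ∀ j ∈ Finset.Icc 1 n, ∑ i ∈ Finset.Icc 1 t, a i j = k) ∧
  (∃ k, ∀ j ∈ Finset.Icc 1 n, ∑ i ∈ Finset.Icc 1 t, a i (rep n (j + i - 1)) = k) ∧
  (∃ c, ∀ i ∈ Finset.Icc 1 t, ∀ j ∈ Finset.Icc 1 n, a i j + a (t + 1 - i) (n + 1 - j) = c)

theorem stmt_6 (d n : ℕ) (hn : 0 < n) (hd : 0 < d) (hdn : d ≤ n)
    (a : ℕ → ℕ → ℕ) (ha : IsSDKA d n a) :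
    IsSFD d n 0 (fun i j => a i j + n * (i - 1)) := by
  obtain ⟨hrow, ⟨k1, hcol⟩, ⟨k2, hdiag⟩, hsym⟩ := ha
  have hbound : ∀ i j, 1 ≤ i → i ≤ d → 1 ≤ j → j ≤ n →
      1 ≤ a i j ∧ a i j ≤ n := by
    intro i j hi1 hi2 hj1 hj2
    have : a i j ∈ Finset.Icc 1 n := by
      rw [← hrow i (by simp [Finset.mem_Icc]; omega)]
      exact Finset.mem_image_of_mem _ (by simp [Finset.mem_Icc]; omega)
    simpa [Finset.mem_Icc] using this
  refine ⟨?_, ⟨k1 + ∑ i ∈ Finset.Icc 1 d, n * (i - 1), ?_⟩,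
    ⟨k2 + ∑ i ∈ Finset.Icc 1 d, n * (i - 1), ?_⟩, ⟨n + 1 + n * (d - 1), ?_⟩⟩
  · ext x
    simp only [Finset.mem_image, Finset.mem_product, Finset.mem_Icc, Prod.exists,
      add_zero]
    constructor
    · rintro ⟨i, j, ⟨⟨hi1, hi2⟩, hj1, hj2⟩, rfl⟩
      obtain ⟨h1, h2⟩ := hbound i j hi1 hi2 hj1 hj2
      have hm : n * (i - 1) ≤ n * (d - 1) := Nat.mul_le_mul_left _ (by omega)
      have hnd : n + n * (d - 1) = n * d := by
        obtain ⟨d', rfl⟩ : ∃ d', d = d' + 1 := ⟨d - 1, by omega⟩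
        simp only [Nat.add_sub_cancel, Nat.mul_succ]
        omega
      omega
    · rintro ⟨hx1, hx2⟩
      obtain ⟨q, r, hrq, hrlt, hqd⟩ : ∃ q r, r + n * q = x - 1 ∧ r < n ∧ q < d := by
        refine ⟨(x - 1) / n, (x - 1) % n, Nat.mod_add_div _ _, Nat.mod_lt _ hn, ?_⟩
        apply Nat.div_lt_of_lt_mul
        omega
      have hmem : r + 1 ∈ (Finset.Icc 1 n).image (a (q + 1)) := by
        rw [hrow (q + 1) (by simp [Finset.mem_Icc]; omega)]
        simp [Finset.mem_Icc]; omega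
      obtain ⟨j, hj, hja⟩ := Finset.mem_image.mp hmem
      simp only [Finset.mem_Icc] at hj
      refine ⟨q + 1, j, ⟨⟨?_, ?_⟩, hj.1, hj.2⟩, ?_⟩
      · omega
      · omega
      · show a (q + 1) j + n * (q + 1 - 1) = x
        rw [hja, Nat.add_sub_cancel]
        omega
  · intro j hj
    rw [Finset.sum_add_distrib, hcol j hj]
  · intro j hj
    rw [Finset.sum_add_distrib, hdiag j hj]
  · intro i hi j hj
    simp only [Finset.mem_Icc] at hi hj
    have h := hsym i (by simp [Finset.mem_Icc]; omega) j (by simp [Finset.mem_Icc]; omega)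
    have hmul : n * (i - 1) + n * (d + 1 - i - 1) = n * (d - 1) := by
      rw [← Nat.mul_add]
      congr 1
      omega
    simp only []
    omega
end

section
/- For any odd integer n ≥ 3 and any integer d with 3 ≤ d ≤ n, there exists a symmetric diagonal Kotzig array of order d×n. -/
lemma rep_ge (n x : ℕ) : 1 ≤ rep n x := by unfold rep; omega

lemma rep_le (n x : ℕ) (hn : 1 ≤ n) : rep n x ≤ n := by
  have := Nat.mod_lt (x-1) (show 0 < n by omega); unfold rep; omega

lemma rep_shift (m y c : ℕ) (hy : 1 ≤ y) : rep (2*m+1) (y + (2*m+1)*c) = rep (2*m+1) y := by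
  unfold rep
  have h1 : y + (2*m+1)*c - 1 = (y-1) + (2*m+1)*c := by omega
  rw [h1, Nat.add_mul_mod_self_left]

lemma rep_mul_rep (m s u w : ℕ) (hs : 1 ≤ s) (hw : 1 ≤ w) :
    rep (2*m+1) (s * rep (2*m+1) w + u) = rep (2*m+1) (s * w + u) := by
  have hq := Nat.div_add_mod (w-1) (2*m+1)
  set q := (w-1)/(2*m+1) with hqdef
  have hw' : w = (2*m+1)*q + rep (2*m+1) w := by unfold rep; omega
  have h2 : s*w + u = (s * rep (2*m+1) w + u) + (2*m+1)*(s*q) := by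
    conv_lhs => rw [hw']
    ring
  rw [h2, rep_shift]
  have : 1 ≤ rep (2*m+1) w := rep_ge _ _
  calc 1 ≤ s * rep (2*m+1) w := Nat.one_le_iff_ne_zero.mpr (by positivity)
  _ ≤ _ := Nat.le_add_right _ _

lemma rep_rep_add (m u w : ℕ) (hw : 1 ≤ w) :
    rep (2*m+1) (rep (2*m+1) w + u) = rep (2*m+1) (w + u) := by
  have := rep_mul_rep m 1 u w (le_refl 1) hw
  simpa using this

lemma I1 (m x y : ℕ) (c : ℤ) (hm : 1 ≤ m) (hx : 1 ≤ x) (hy : 1 ≤ y)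
    (hxy : (x:ℤ) + y = 1 + (2*m+1)*c) :
    rep (2*m+1) x + rep (2*m+1) y = 2*m+2 := by
  set n := 2*m+1 with hn
  -- c is positive
  have hc0 : 0 < c := by
    by_contra hcon
    push_neg at hcon
    have h1 : ((2*m+1 : ℤ))*c ≤ 0 := mul_nonpos_of_nonneg_of_nonpos (by positivity) hcon
    have h2 : (2:ℤ) ≤ (x:ℤ) + y := by exact_mod_cast Nat.add_le_add hx hy
    omega
  obtain ⟨c', rfl⟩ : ∃ c' : ℕ, c = (c' : ℤ) := ⟨c.toNat, (Int.toNat_of_nonneg hc0.le).symm⟩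
  have hxy' : x + y = 1 + (2*m+1)*c' := by exact_mod_cast hxy
  have hA := Nat.div_add_mod (x-1) n
  have hB := Nat.div_add_mod (y-1) n
  set A := (x-1) % n with hA'
  set B := (y-1) % n with hB'
  have hAlt : A < n := Nat.mod_lt _ (by omega)
  have hBlt : B < n := Nat.mod_lt _ (by omega)
  set qx := (x-1)/n with hqx
  set qy := (y-1)/n with hqy
  have h2 : A + B + 1 + (n*qx + n*qy) = n * c' := by
    have e : n*c' = (2*m+1)*c' := by rw [hn]
    omega
  have hdvd : n ∣ A + B + 1 := by
    have d1 : n ∣ n * c' := dvd_mul_right _ _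
    have d2 : n ∣ n*qx + n*qy := Dvd.dvd.add (dvd_mul_right _ _) (dvd_mul_right _ _)
    have e : A + B + 1 = n*c' - (n*qx + n*qy) := by omega
    rw [e]; exact Nat.dvd_sub d1 d2
  obtain ⟨k, hk⟩ := hdvd
  have hk1 : k = 1 := by
    rcases Nat.lt_or_ge k 2 with hlt | hge
    · interval_cases k <;> omega
    · exfalso
      have : n*2 ≤ n*k := Nat.mul_le_mul_left n hge
      omega
  rw [hk1, mul_one] at hk
  have hr1 : rep n x = A + 1 := by unfold rep; rfl
  have hr2 : rep n y = B + 1 := by unfold rep; rfl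
  omega

lemma I2 (m x : ℕ) (hm : 1 ≤ m) (hx : 1 ≤ x) :
    rep (2*m+1) x + rep (2*m+1) (x + m) = rep (2*m+1) (2*x + 2*m) + (m+1) := by
  set n := 2*m+1 with hn
  set A := (x-1) % n with hA
  have hAlt : A < n := Nat.mod_lt _ (by omega)
  have hxA : (x-1) ≡ A [MOD n] := by
    show (x-1) % n = A % n
    rw [Nat.mod_eq_of_lt hAlt]
  have h1 : rep n x = A + 1 := by unfold rep; rfl
  have h2 : rep n (x+m) = (A + m) % n + 1 := by
    unfold rep
    have e : x + m - 1 = (x-1) + m := by omega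
    rw [e, hxA.add_right m]
  have h3 : rep n (2*x + 2*m) = (2*A) % n + 1 := by
    unfold rep
    have e : 2*x + 2*m - 1 = (2*(x-1)) + n := by omega
    rw [e, Nat.add_mod_right, hxA.mul_left 2]
  rw [h1, h2, h3]
  rcases Nat.lt_or_ge (A+m) n with hc | hc
  · rw [Nat.mod_eq_of_lt hc, Nat.mod_eq_of_lt (by omega : 2*A < n)]
    omega
  · have e1 : (A+m) % n = A + m - n := by
      rw [Nat.mod_eq_sub_mod hc, Nat.mod_eq_of_lt (by omega)]
    have e2 : (2*A) % n = 2*A - n := by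
      rw [Nat.mod_eq_sub_mod (by omega), Nat.mod_eq_of_lt (by omega)]
    omega

lemma image_row (m s u : ℕ) (hm : 1 ≤ m) (hs : 1 ≤ s) (hco : Nat.Coprime s (2*m+1)) :
    (Finset.Icc 1 (2*m+1)).image (fun j => rep (2*m+1) (s*j+u)) = Finset.Icc 1 (2*m+1) := by
  set n := 2*m+1 with hn
  apply Finset.eq_of_subset_of_card_le
  · intro x hx
    simp only [Finset.mem_image] at hx
    obtain ⟨j, hj, rfl⟩ := hx
    simp only [Finset.mem_Icc]
    exact ⟨rep_ge _ _, rep_le _ _ (by omega)⟩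
  · rw [Finset.card_image_of_injOn]
    intro a ha b hb hab
    simp only [Finset.coe_Icc, Set.mem_Icc] at ha hb
    have h1 : (s*a + u - 1) % n = (s*b + u - 1) % n := by
      have : rep n (s*a+u) = rep n (s*b+u) := hab
      unfold rep at this; omega
    have ha1 : 1 ≤ s*a := by have := Nat.mul_le_mul hs ha.1; simpa using this
    have hb1 : 1 ≤ s*b := by have := Nat.mul_le_mul hs hb.1; simpa using this
    have h2 : s*a + u ≡ s*b + u [MOD n] := by
      have h1' : (s*a + u - 1) ≡ (s*b + u - 1) [MOD n] := h1
      have := h1'.add_right 1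
      rwa [Nat.sub_add_cancel (by omega), Nat.sub_add_cancel (by omega)] at this
    have h3 : s*a ≡ s*b [MOD n] := Nat.ModEq.add_right_cancel' u h2
    have h4 : a ≡ b [MOD n] := Nat.ModEq.cancel_left_of_coprime hco.symm h3
    have h5 : a % n = b % n := h4
    rcases Nat.lt_or_ge a n with hA | hA <;> rcases Nat.lt_or_ge b n with hB | hB
    · rw [Nat.mod_eq_of_lt hA, Nat.mod_eq_of_lt hB] at h5; omega
    · have : b = n := by omega
      subst this
      rw [Nat.mod_eq_of_lt hA, Nat.mod_self] at h5; omega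
    · have : a = n := by omega
      subst this
      rw [Nat.mod_self, Nat.mod_eq_of_lt hB] at h5; omega
    · omega

/-- slope for the 5-block: `s5 ≡ -4⁻¹ (mod 2m+1)`. -/
def s5 (m : ℕ) : ℕ := (2*m+1) - ((m+1)*(m+1)) % (2*m+1)

lemma s5_even (a : ℕ) (ha : 1 ≤ a) : s5 (2*a) = a := by
  unfold s5
  have h1 : (2*a+1)*(2*a+1) = (2*(2*a)+1)*a + (3*a+1) := by ring
  have h2 : ((2*(2*a)+1)*a + (3*a+1)) % (2*(2*a)+1) = 3*a+1 := by
    rw [Nat.mul_add_mod]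
    exact Nat.mod_eq_of_lt (by omega)
  have h3 : (2*a+1)*(2*a+1) % (2*(2*a)+1) = 3*a+1 := by rw [h1, h2]
  omega

lemma s5_odd (a : ℕ) : s5 (2*a+1) = 3*a+2 := by
  unfold s5
  have h1 : (2*a+1+1)*(2*a+1+1) = (2*(2*a+1)+1)*(a+1) + (a+1) := by ring
  have h2 : ((2*(2*a+1)+1)*(a+1) + (a+1)) % (2*(2*a+1)+1) = a+1 := by
    rw [Nat.mul_add_mod]
    exact Nat.mod_eq_of_lt (by omega)
  have h3 : (2*a+1+1)*(2*a+1+1) % (2*(2*a+1)+1) = a+1 := by rw [h1, h2]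
  omega

lemma s5_pos (m : ℕ) (hm : 1 ≤ m) : 1 ≤ s5 m := by
  rcases Nat.even_or_odd m with ⟨a, rfl⟩ | ⟨a, rfl⟩
  · rw [show a + a = 2*a by ring, s5_even a (by omega)]; omega
  · rw [s5_odd a]; omega

lemma s5_w (m : ℕ) (hm : 1 ≤ m) : ∃ w : ℕ, 4 * s5 m + 1 = (2*m+1) * w := by
  rcases Nat.even_or_odd m with ⟨a, rfl⟩ | ⟨a, rfl⟩
  · rw [show a + a = 2*a by ring, s5_even a (by omega)]
    exact ⟨1, by ring⟩
  · rw [s5_odd a]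
    exact ⟨3, by ring⟩

lemma s5_q (m : ℕ) (hm : 1 ≤ m) : ∃ qq : ℕ, s5 m + m*m = (2*m+1) * qq := by
  rcases Nat.even_or_odd m with ⟨a, rfl⟩ | ⟨a, rfl⟩
  · rw [show a + a = 2*a by ring, s5_even a (by omega)]
    exact ⟨a, by ring⟩
  · rw [s5_odd a]
    exact ⟨a+1, by ring⟩

lemma s5_e (m : ℕ) (hm : 1 ≤ m) : ∃ ee : ℕ, 2 * s5 m = m + (2*m+1) * ee := by
  rcases Nat.even_or_odd m with ⟨a, rfl⟩ | ⟨a, rfl⟩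
  · rw [show a + a = 2*a by ring, s5_even a (by omega)]
    exact ⟨0, by ring⟩
  · rw [s5_odd a]
    exact ⟨1, by ring⟩

lemma s5_coprime (m : ℕ) (hm : 1 ≤ m) : Nat.Coprime (s5 m) (2*m+1) := by
  obtain ⟨w, hw⟩ := s5_w m hm
  have hg1 : Nat.gcd (s5 m) (2*m+1) ∣ 4 * s5 m + 1 := by
    rw [hw]; exact Dvd.dvd.mul_right (Nat.gcd_dvd_right _ _) w
  have hg2 : Nat.gcd (s5 m) (2*m+1) ∣ 4 * s5 m := Dvd.dvd.mul_left (Nat.gcd_dvd_left _ _) 4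
  have := Nat.dvd_sub hg1 hg2
  rw [show 4 * s5 m + 1 - 4 * s5 m = 1 by omega] at this
  exact Nat.dvd_one.mp this

lemma cop_2m (m : ℕ) : Nat.Coprime (2*m) (2*m+1) := by
  have h := (Nat.coprime_add_mul_right_right (2*m) 1 1).mpr (Nat.coprime_one_right (2*m))
  rwa [show 1 + 1*(2*m) = 2*m+1 by ring] at h

lemma cop_m (m : ℕ) : Nat.Coprime m (2*m+1) := by
  have h := (Nat.coprime_add_mul_right_right m 1 2).mpr (Nat.coprime_one_right m)
  rwa [show 1 + 2*m = 2*m+1 by ring] at h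

lemma cop_2m1 (m : ℕ) (hm : 1 ≤ m) : Nat.Coprime (2*m-1) (2*m+1) := by
  have h2 : Nat.Coprime (2*m-1) 2 := by
    rw [Nat.coprime_two_right]
    exact ⟨m-1, by omega⟩
  have h3 := (Nat.coprime_add_self_right (m := 2*m-1) (n := 2)).mpr h2
  rwa [show 2 + (2*m-1) = 2*m+1 by omega] at h3

lemma sum_split (f : ℕ → ℕ) : ∀ (q d : ℕ), 4*q ≤ d →
    ∑ i ∈ Finset.Icc 1 d, f i
      = (∑ k ∈ Finset.Icc 1 q, (f (2*k-1) + f (2*k) + f (d+1-2*k) + f (d+2-2*k)))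
        + ∑ i ∈ Finset.Icc (2*q+1) (d-2*q), f i
  | 0, d, _ => by simp
  | (p+1), d, h => by
    have ih := sum_split f p d (by omega)
    rw [ih]
    have hsplit : Finset.Icc (2*p+1) (d-2*p)
        = insert (2*p+1) (insert (2*p+2) (insert (d-2*p-1) (insert (d-2*p)
            (Finset.Icc (2*p+3) (d-2*p-2))))) := by
      ext x
      simp only [Finset.mem_Icc, Finset.mem_insert]
      omega
    rw [hsplit, Finset.sum_insert (by simp only [Finset.mem_Icc, Finset.mem_insert]; omega),
        Finset.sum_insert (by simp only [Finset.mem_Icc, Finset.mem_insert]; omega),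
        Finset.sum_insert (by simp only [Finset.mem_Icc, Finset.mem_insert]; omega),
        Finset.sum_insert (by simp only [Finset.mem_Icc]; omega),
        Finset.sum_Icc_succ_top (show 1 ≤ p+1 by omega)]
    have e5 : 2*(p+1)+1 = 2*p+3 := by omega
    have e3 : d+1-2*(p+1) = d-2*p-1 := by omega
    have e4 : d+2-2*(p+1) = d-2*p := by omega
    have e6 : d-2*(p+1) = d-2*p-2 := by omega
    have e1 : 2*(p+1)-1 = 2*p+1 := by omega
    have e2 : 2*(p+1) = 2*p+2 := by omega
    rw [e5, e6, e3, e4, e1, e2]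
    omega

/-- The Kotzig array: generic top rows `i ≤ t`, mirrored bottom rows `i ≥ d+1-t`,
and a middle block given by `mb`. -/
def arrG (m d t : ℕ) (mb : ℕ → ℕ × ℕ) (i j : ℕ) : ℕ :=
  if i ≤ t then
    (if i % 2 = 1 then rep (2*m+1) (j + (d*(m+1) + 2*m*i))
     else rep (2*m+1) (2*m*j + (i + 2*m*(d*(m+1)))))
  else if d+1-t ≤ i then
    (if (d+1-i) % 2 = 1 then rep (2*m+1) (j + ((d+1-i) + 2*m*(d*(m+1))))
     else rep (2*m+1) (2*m*j + (2 + d*(m+1) + 2*m*(d+1-i))))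
  else rep (2*m+1) ((mb (i-t)).1 * j + (mb (i-t)).2)

lemma arrG_top_odd (m d t : ℕ) (mb : ℕ → ℕ × ℕ) (i j : ℕ) (h2 : i ≤ t) (h3 : i % 2 = 1) :
    arrG m d t mb i j = rep (2*m+1) (j + (d*(m+1) + 2*m*i)) := by
  unfold arrG; rw [if_pos h2, if_pos h3]

lemma arrG_top_even (m d t : ℕ) (mb : ℕ → ℕ × ℕ) (i j : ℕ) (h2 : i ≤ t) (h3 : i % 2 = 0) :
    arrG m d t mb i j = rep (2*m+1) (2*m*j + (i + 2*m*(d*(m+1)))) := by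
  unfold arrG; rw [if_pos h2, if_neg (by omega)]

lemma arrG_bot_odd (m d t : ℕ) (mb : ℕ → ℕ × ℕ) (i i' j : ℕ) (hii' : i' = d+1-i)
    (h2 : ¬ i ≤ t) (h3 : d+1-t ≤ i) (h4 : i' % 2 = 1) :
    arrG m d t mb i j = rep (2*m+1) (j + (i' + 2*m*(d*(m+1)))) := by
  subst hii'; unfold arrG; rw [if_neg h2, if_pos h3, if_pos h4]

lemma arrG_bot_even (m d t : ℕ) (mb : ℕ → ℕ × ℕ) (i i' j : ℕ) (hii' : i' = d+1-i)
    (h2 : ¬ i ≤ t) (h3 : d+1-t ≤ i) (h4 : i' % 2 = 0) :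
    arrG m d t mb i j = rep (2*m+1) (2*m*j + (2 + d*(m+1) + 2*m*i')) := by
  subst hii'; unfold arrG; rw [if_neg h2, if_pos h3, if_neg (by omega)]

lemma arrG_mid (m d t : ℕ) (mb : ℕ → ℕ × ℕ) (i j : ℕ) (h2 : ¬ i ≤ t) (h3 : ¬ d+1-t ≤ i) :
    arrG m d t mb i j = rep (2*m+1) ((mb (i-t)).1 * j + (mb (i-t)).2) := by
  unfold arrG; rw [if_neg h2, if_neg h3]

lemma gen_col (m d t : ℕ) (mb : ℕ → ℕ × ℕ) (b j : ℕ) (hm : 1 ≤ m)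
    (hbt : 2*b+2 ≤ t) (h2t : 2*t ≤ d) (hj : 1 ≤ j) :
    (arrG m d t mb (2*b+1) j + arrG m d t mb (2*b+2) j = 2*m+2) ∧
    (arrG m d t mb (d-(2*b+1)) j + arrG m d t mb (d-(2*b)) j = 2*m+2) := by
  constructor
  · rw [arrG_top_odd m d t mb _ j (by omega) (by omega),
        arrG_top_even m d t mb _ j (by omega) (by omega)]
    apply I1 m _ _ ((j:ℤ) + d*(m+1) + 2*b + 1) hm (by omega) (by omega)
    push_cast
    ring
  · rw [arrG_bot_even m d t mb _ (2*b+2) j (by omega) (by omega) (by omega) (by omega),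
        arrG_bot_odd m d t mb _ (2*b+1) j (by omega) (by omega) (by omega) (by omega)]
    apply I1 m _ _ ((j:ℤ) + d*(m+1) + 2*b + 2) hm (by omega) (by omega)
    push_cast
    ring

lemma gen_diag (m d t : ℕ) (mb : ℕ → ℕ × ℕ) (b j : ℕ) (hm : 1 ≤ m)
    (hbt : 2*b+2 ≤ t) (h2t : 2*t ≤ d) (hj : 1 ≤ j) :
    (arrG m d t mb (2*b+1) (rep (2*m+1) (j + (2*b+1) - 1))
      + arrG m d t mb (d-(2*b+1)) (rep (2*m+1) (j + (d-(2*b+1)) - 1)) = 2*m+2) ∧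
    (arrG m d t mb (2*b+2) (rep (2*m+1) (j + (2*b+2) - 1))
      + arrG m d t mb (d-(2*b)) (rep (2*m+1) (j + (d-(2*b)) - 1)) = 2*m+2) := by
  obtain ⟨g, rfl⟩ : ∃ g, d = 2*b+2+g := ⟨d-(2*b+2), by omega⟩
  have e1 : (2*b+2+g)-(2*b+1) = g+1 := by omega
  have e2 : (2*b+2+g)-(2*b) = g+2 := by omega
  have e3 : j + (2*b+1) - 1 = j + 2*b := by omega
  have e4 : j + (g+1) - 1 = j + g := by omega
  have e5 : j + (2*b+2) - 1 = j + (2*b+1) := by omega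
  have e6 : j + (g+2) - 1 = j + (g+1) := by omega
  rw [e1, e2, e3, e4, e5, e6]
  constructor
  · rw [arrG_top_odd m _ t mb _ _ (by omega) (by omega),
        arrG_bot_even m _ t mb (g+1) (2*b+2) _ (by omega) (by omega) (by omega) (by omega),
        rep_rep_add m _ _ (by omega), rep_mul_rep m _ _ _ (by omega) (by omega)]
    apply I1 m _ _ ((j:ℤ) + 2*g + 6*b + 5) hm (by omega) (by omega)
    push_cast
    ring
  · rw [arrG_top_even m _ t mb _ _ (by omega) (by omega),
        arrG_bot_odd m _ t mb (g+2) (2*b+1) _ (by omega) (by omega) (by omega) (by omega),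
        rep_rep_add m _ _ (by omega), rep_mul_rep m _ _ _ (by omega) (by omega)]
    apply I1 m _ _ ((j:ℤ) + (2*m+1)*g + 4*(m+1)*b + 4*m + 3) hm (by omega) (by omega)
    push_cast
    ring

lemma gen_sym (m d t : ℕ) (mb : ℕ → ℕ × ℕ) (i j j' : ℕ) (hm : 1 ≤ m)
    (hi1 : 1 ≤ i) (hit : i ≤ t) (h2t : 2*t ≤ d) (hjj' : j + j' = 2*m+2)
    (hj : 1 ≤ j) (hj' : 1 ≤ j') :
    arrG m d t mb i j + arrG m d t mb (d+1-i) j' = 2*m+2 := by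
  have hii : i = d+1-(d+1-i) := by omega
  by_cases hio : i % 2 = 1
  · rw [arrG_top_odd m d t mb i j hit hio,
        arrG_bot_odd m d t mb (d+1-i) i j' (by omega) (by omega) (by omega) hio]
    apply I1 m _ _ ((d:ℤ)*(m+1) + i + 1) hm (by omega) (by omega)
    have hz : (j:ℤ) + j' = 2*m+2 := by exact_mod_cast hjj'
    push_cast
    linear_combination hz
  · rw [arrG_top_even m d t mb i j hit (by omega),
        arrG_bot_even m d t mb (d+1-i) i j' (by omega) (by omega) (by omega) (by omega)]
    apply I1 m _ _ ((2*m+1 : ℤ) + d*(m+1) + i) hm (by omega) (by omega)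
    have hz : (j:ℤ) + j' = 2*m+2 := by exact_mod_cast hjj'
    push_cast
    linear_combination (2*m : ℤ) * hz

def mb0 : ℕ → ℕ × ℕ := fun _ => (1, 0)
def mb3 (m : ℕ) : ℕ → ℕ × ℕ := fun k =>
  if k = 1 then (m, 1+m) else if k = 2 then (1, 0) else (m, 1)
def mb6 (m : ℕ) : ℕ → ℕ × ℕ := fun k =>
  if k = 1 then (1, 1) else if k = 2 then (1, 1+m) else if k = 3 then (2*m-1, 3)
  else if k = 4 then (2*m-1, 0) else if k = 5 then (1, m) else (1, 2*m)
def mb5 (m : ℕ) : ℕ → ℕ × ℕ := fun k =>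
  if k = 1 then (s5 m, 1+m) else if k = 2 then (s5 m, 1 + m*(m+1) + m) else if k = 3 then (1, 0)
  else if k = 4 then (s5 m, 1) else (s5 m, 1 + m*(m+1))

lemma mid3_col (m d t j : ℕ) (hm : 1 ≤ m) (hd : d = 2*t+3) (hj : 1 ≤ j) :
    ∑ i ∈ Finset.Icc (t+1) (d-t), arrG m d t (mb3 m) i j = 3*m+3 := by
  subst hd
  have hI : Finset.Icc (t+1) (2*t+3-t) = {t+1, t+2, t+3} := by
    ext x
    simp only [Finset.mem_Icc, Finset.mem_insert, Finset.mem_singleton]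
    omega
  rw [hI, Finset.sum_insert (by simp only [Finset.mem_insert, Finset.mem_singleton]; omega),
      Finset.sum_insert (by simp only [Finset.mem_singleton]; omega), Finset.sum_singleton,
      arrG_mid m _ t _ (t+1) j (by omega) (by omega),
      arrG_mid m _ t _ (t+2) j (by omega) (by omega),
      arrG_mid m _ t _ (t+3) j (by omega) (by omega),
      show t+1-t = 1 by omega, show t+2-t = 2 by omega, show t+3-t = 3 by omega]
  norm_num [mb3]
  have h2 := I2 m (m*j+1) hm (by omega)
  have e1 : m*j + (1+m) = m*j+1 + m := by ring
  rw [e1]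
  have h1 := I1 m (2*(m*j+1)+2*m) j ((j:ℤ)+1) hm (by omega) (by omega) (by push_cast; ring)
  omega

lemma rep_idem (m w : ℕ) (hw : 1 ≤ w) :
    rep (2*m+1) (rep (2*m+1) w) = rep (2*m+1) w := by
  have := rep_rep_add m 0 w hw
  simpa using this

lemma mid3_diag (m d t j : ℕ) (hm : 1 ≤ m) (hd : d = 2*t+3) (hj : 1 ≤ j) :
    ∑ i ∈ Finset.Icc (t+1) (d-t),
      arrG m d t (mb3 m) i (rep (2*m+1) (j + i - 1)) = 3*m+3 := by
  subst hd
  have hI : Finset.Icc (t+1) (2*t+3-t) = {t+1, t+2, t+3} := by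
    ext x
    simp only [Finset.mem_Icc, Finset.mem_insert, Finset.mem_singleton]
    omega
  rw [hI, Finset.sum_insert (by simp only [Finset.mem_insert, Finset.mem_singleton]; omega),
      Finset.sum_insert (by simp only [Finset.mem_singleton]; omega), Finset.sum_singleton,
      arrG_mid m _ t _ (t+1) _ (by omega) (by omega),
      arrG_mid m _ t _ (t+2) _ (by omega) (by omega),
      arrG_mid m _ t _ (t+3) _ (by omega) (by omega),
      show t+1-t = 1 by omega, show t+2-t = 2 by omega, show t+3-t = 3 by omega]
  norm_num [mb3]
  rw [rep_mul_rep m m _ _ hm (by omega),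
      rep_idem m _ (by omega),
      rep_mul_rep m m _ _ hm (by omega)]
  have e1 : m*(j+t) + (1+m) = (m*(j+t)+1) + m := by ring
  have e2 : m*(j+(t+2)) + 1 = (m*(j+t)+1) + m + m := by ring
  rw [e1, e2]
  have h2 := I2 m (m*(j+t)+1+m) hm (by omega)
  have h1 := I1 m (2*(m*(j+t)+1+m)+2*m) (j+(t+1)) ((j:ℤ)+t+2) hm (by omega) (by omega)
    (by push_cast; ring)
  omega

lemma mid3_sym (m d t i j j' : ℕ) (hm : 1 ≤ m) (hd : d = 2*t+3) (hti : t < i)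
    (hitd : i + t ≤ d) (hjj' : j + j' = 2*m+2) (hj : 1 ≤ j) (hj' : 1 ≤ j') :
    arrG m d t (mb3 m) i j + arrG m d t (mb3 m) (d+1-i) j' = 2*m+2 := by
  subst hd
  have hz : (j:ℤ) + j' = 2*m+2 := by exact_mod_cast hjj'
  have hcase : i = t+1 ∨ i = t+2 ∨ i = t+3 := by omega
  rcases hcase with rfl | rfl | rfl
  · rw [show 2*t+3+1-(t+1) = t+3 by omega,
        arrG_mid m _ t _ (t+1) _ (by omega) (by omega),
        arrG_mid m _ t _ (t+3) _ (by omega) (by omega),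
        show t+1-t = 1 by omega, show t+3-t = 3 by omega,
        show ((mb3 m 1).1 : ℕ) = m from rfl, show ((mb3 m 1).2 : ℕ) = 1+m from rfl,
        show ((mb3 m 3).1 : ℕ) = m from rfl, show ((mb3 m 3).2 : ℕ) = 1 from rfl]
    apply I1 m _ _ ((m:ℤ)+1) hm (by omega) (by omega)
    push_cast
    linear_combination (m:ℤ)*hz
  · rw [show 2*t+3+1-(t+2) = t+2 by omega,
        arrG_mid m _ t _ (t+2) j (by omega) (by omega),
        arrG_mid m _ t _ (t+2) j' (by omega) (by omega),
        show t+2-t = 2 by omega,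
        show ((mb3 m 2).1 : ℕ) = 1 from rfl, show ((mb3 m 2).2 : ℕ) = 0 from rfl]
    apply I1 m _ _ (1:ℤ) hm (by omega) (by omega)
    push_cast
    linear_combination hz
  · rw [show 2*t+3+1-(t+3) = t+1 by omega,
        arrG_mid m _ t _ (t+3) _ (by omega) (by omega),
        arrG_mid m _ t _ (t+1) _ (by omega) (by omega),
        show t+1-t = 1 by omega, show t+3-t = 3 by omega,
        show ((mb3 m 1).1 : ℕ) = m from rfl, show ((mb3 m 1).2 : ℕ) = 1+m from rfl,
        show ((mb3 m 3).1 : ℕ) = m from rfl, show ((mb3 m 3).2 : ℕ) = 1 from rfl]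
    apply I1 m _ _ ((m:ℤ)+1) hm (by omega) (by omega)
    push_cast
    linear_combination (m:ℤ)*hz

lemma mid6_col (m d t j : ℕ) (hm : 1 ≤ m) (hd : d = 2*t+6) (hj : 1 ≤ j) :
    ∑ i ∈ Finset.Icc (t+1) (d-t), arrG m d t (mb6 m) i j = 6*m+6 := by
  subst hd
  have hI : Finset.Icc (t+1) (2*t+6-t) = {t+1, t+2, t+3, t+4, t+5, t+6} := by
    ext x; simp only [Finset.mem_Icc, Finset.mem_insert, Finset.mem_singleton]; omega
  rw [hI,
      Finset.sum_insert (by simp only [Finset.mem_insert, Finset.mem_singleton]; omega),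
      Finset.sum_insert (by simp only [Finset.mem_insert, Finset.mem_singleton]; omega),
      Finset.sum_insert (by simp only [Finset.mem_insert, Finset.mem_singleton]; omega),
      Finset.sum_insert (by simp only [Finset.mem_insert, Finset.mem_singleton]; omega),
      Finset.sum_insert (by simp only [Finset.mem_singleton]; omega),
      Finset.sum_singleton,
      arrG_mid m _ t _ (t+1) _ (by omega) (by omega),
      arrG_mid m _ t _ (t+2) _ (by omega) (by omega),
      arrG_mid m _ t _ (t+3) _ (by omega) (by omega),
      arrG_mid m _ t _ (t+4) _ (by omega) (by omega),
      arrG_mid m _ t _ (t+5) _ (by omega) (by omega),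
      arrG_mid m _ t _ (t+6) _ (by omega) (by omega),
      show t+1-t = 1 by omega, show t+2-t = 2 by omega, show t+3-t = 3 by omega,
      show t+4-t = 4 by omega, show t+5-t = 5 by omega, show t+6-t = 6 by omega,
      show ((mb6 m 1).1 : ℕ) = 1 from rfl, show ((mb6 m 1).2 : ℕ) = 1 from rfl,
      show ((mb6 m 2).1 : ℕ) = 1 from rfl, show ((mb6 m 2).2 : ℕ) = 1+m from rfl,
      show ((mb6 m 3).1 : ℕ) = 2*m-1 from rfl, show ((mb6 m 3).2 : ℕ) = 3 from rfl,
      show ((mb6 m 4).1 : ℕ) = 2*m-1 from rfl, show ((mb6 m 4).2 : ℕ) = 0 from rfl,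
      show ((mb6 m 5).1 : ℕ) = 1 from rfl, show ((mb6 m 5).2 : ℕ) = m from rfl,
      show ((mb6 m 6).1 : ℕ) = 1 from rfl, show ((mb6 m 6).2 : ℕ) = 2*m from rfl]
  rw [show (1*j+(1+m) : ℕ) = (1*j+1) + m by ring, show (1*j+2*m : ℕ) = (1*j+m) + m by ring]
  have h2a := I2 m (1*j+1) hm (by omega)
  have h3a := I1 m (2*(1*j+1)+2*m) ((2*m-1)*j+0) ((j:ℤ)+1) hm (by omega)
    (by have := Nat.mul_le_mul (show 1 ≤ 2*m-1 by omega) hj; omega)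
    (by push_cast [Nat.cast_sub (show 1 ≤ 2*m by omega)]; ring)
  have h5a := I2 m (1*j+m) hm (by omega)
  have h6a := I1 m (2*(1*j+m)+2*m) ((2*m-1)*j+3) ((j:ℤ)+2) hm (by omega) (by omega)
    (by push_cast [Nat.cast_sub (show 1 ≤ 2*m by omega)]; ring)
  omega

lemma mid6_diag (m d t j : ℕ) (hm : 1 ≤ m) (hd : d = 2*t+6) (hj : 1 ≤ j) :
    ∑ i ∈ Finset.Icc (t+1) (d-t),
      arrG m d t (mb6 m) i (rep (2*m+1) (j + i - 1)) = 6*m+6 := by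
  subst hd
  have hI : Finset.Icc (t+1) (2*t+6-t) = {t+1, t+2, t+3, t+4, t+5, t+6} := by
    ext x; simp only [Finset.mem_Icc, Finset.mem_insert, Finset.mem_singleton]; omega
  rw [hI,
      Finset.sum_insert (by simp only [Finset.mem_insert, Finset.mem_singleton]; omega),
      Finset.sum_insert (by simp only [Finset.mem_insert, Finset.mem_singleton]; omega),
      Finset.sum_insert (by simp only [Finset.mem_insert, Finset.mem_singleton]; omega),
      Finset.sum_insert (by simp only [Finset.mem_insert, Finset.mem_singleton]; omega),
      Finset.sum_insert (by simp only [Finset.mem_singleton]; omega),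
      Finset.sum_singleton,
      arrG_mid m _ t _ (t+1) _ (by omega) (by omega),
      arrG_mid m _ t _ (t+2) _ (by omega) (by omega),
      arrG_mid m _ t _ (t+3) _ (by omega) (by omega),
      arrG_mid m _ t _ (t+4) _ (by omega) (by omega),
      arrG_mid m _ t _ (t+5) _ (by omega) (by omega),
      arrG_mid m _ t _ (t+6) _ (by omega) (by omega),
      show t+1-t = 1 by omega, show t+2-t = 2 by omega, show t+3-t = 3 by omega,
      show t+4-t = 4 by omega, show t+5-t = 5 by omega, show t+6-t = 6 by omega,
      show ((mb6 m 1).1 : ℕ) = 1 from rfl, show ((mb6 m 1).2 : ℕ) = 1 from rfl,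
      show ((mb6 m 2).1 : ℕ) = 1 from rfl, show ((mb6 m 2).2 : ℕ) = 1+m from rfl,
      show ((mb6 m 3).1 : ℕ) = 2*m-1 from rfl, show ((mb6 m 3).2 : ℕ) = 3 from rfl,
      show ((mb6 m 4).1 : ℕ) = 2*m-1 from rfl, show ((mb6 m 4).2 : ℕ) = 0 from rfl,
      show ((mb6 m 5).1 : ℕ) = 1 from rfl, show ((mb6 m 5).2 : ℕ) = m from rfl,
      show ((mb6 m 6).1 : ℕ) = 1 from rfl, show ((mb6 m 6).2 : ℕ) = 2*m from rfl,
      show j+(t+1)-1 = j+t by omega, show j+(t+2)-1 = j+t+1 by omega,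
      show j+(t+3)-1 = j+t+2 by omega, show j+(t+4)-1 = j+t+3 by omega,
      show j+(t+5)-1 = j+t+4 by omega, show j+(t+6)-1 = j+t+5 by omega,
      rep_mul_rep m 1 1 (j+t) (by omega) (by omega),
      rep_mul_rep m 1 (1+m) (j+t+1) (by omega) (by omega),
      rep_mul_rep m (2*m-1) 3 (j+t+2) (by omega) (by omega),
      rep_mul_rep m (2*m-1) 0 (j+t+3) (by omega) (by omega),
      rep_mul_rep m 1 m (j+t+4) (by omega) (by omega),
      rep_mul_rep m 1 (2*m) (j+t+5) (by omega) (by omega),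
      show (1*(j+t+1)+(1+m) : ℕ) = j+t+m+2 by ring,
      show (1*(j+t+5)+2*m : ℕ) = j+t+2*m+5 by ring]
  have h1 : rep (2*m+1) (j+t+m+2+m) = rep (2*m+1) (1*(j+t)+1) := by
    rw [show (j+t+m+2+m : ℕ) = (1*(j+t)+1) + (2*m+1)*1 by ring]
    exact rep_shift m _ 1 (by omega)
  have h2 := I2 m (j+t+m+2) hm (by omega)
  rw [h1] at h2
  have h3 := I1 m (2*(j+t+m+2)+2*m) ((2*m-1)*(j+t+2)+3) ((j:ℤ)+t+4) hm (by omega) (by omega)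
    (by push_cast [Nat.cast_sub (show 1 ≤ 2*m by omega)]; ring)
  have h4 : rep (2*m+1) (j+t+2*m+5+m) = rep (2*m+1) (1*(j+t+4)+m) := by
    rw [show (j+t+2*m+5+m : ℕ) = (1*(j+t+4)+m) + (2*m+1)*1 by ring]
    exact rep_shift m _ 1 (by omega)
  have h5 := I2 m (j+t+2*m+5) hm (by omega)
  rw [h4] at h5
  have h6 := I1 m (2*(j+t+2*m+5)+2*m) ((2*m-1)*(j+t+3)+0) ((j:ℤ)+t+6) hm (by omega)
    (by have := Nat.mul_le_mul (show 1 ≤ 2*m-1 by omega) (show 1 ≤ j+t+3 by omega); omega)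
    (by push_cast [Nat.cast_sub (show 1 ≤ 2*m by omega)]; ring)
  omega

lemma mid6_sym (m d t i j j' : ℕ) (hm : 1 ≤ m) (hd : d = 2*t+6) (hti : t < i)
    (hitd : i + t ≤ d) (hjj' : j + j' = 2*m+2) (hj : 1 ≤ j) (hj' : 1 ≤ j') :
    arrG m d t (mb6 m) i j + arrG m d t (mb6 m) (d+1-i) j' = 2*m+2 := by
  subst hd
  have hz : (j:ℤ) + j' = 2*m+2 := by exact_mod_cast hjj'
  have hmul1 : 1*1 ≤ (2*m-1)*j := Nat.mul_le_mul (by omega) hj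
  have hmul2 : 1*1 ≤ (2*m-1)*j' := Nat.mul_le_mul (by omega) hj'
  have hcase : i = t+1 ∨ i = t+2 ∨ i = t+3 ∨ i = t+4 ∨ i = t+5 ∨ i = t+6 := by omega
  rcases hcase with rfl | rfl | rfl | rfl | rfl | rfl
  · rw [show 2*t+6+1-(t+1) = t+6 by omega,
        arrG_mid m _ t _ (t+1) _ (by omega) (by omega),
        arrG_mid m _ t _ (t+6) _ (by omega) (by omega),
        show t+1-t = 1 by omega, show t+6-t = 6 by omega,
        show ((mb6 m 1).1 : ℕ) = 1 from rfl, show ((mb6 m 1).2 : ℕ) = 1 from rfl,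
        show ((mb6 m 6).1 : ℕ) = 1 from rfl, show ((mb6 m 6).2 : ℕ) = 2*m from rfl]
    apply I1 m _ _ (2:ℤ) hm (by omega) (by omega)
    push_cast
    linear_combination hz
  · rw [show 2*t+6+1-(t+2) = t+5 by omega,
        arrG_mid m _ t _ (t+2) _ (by omega) (by omega),
        arrG_mid m _ t _ (t+5) _ (by omega) (by omega),
        show t+2-t = 2 by omega, show t+5-t = 5 by omega,
        show ((mb6 m 2).1 : ℕ) = 1 from rfl, show ((mb6 m 2).2 : ℕ) = 1+m from rfl,
        show ((mb6 m 5).1 : ℕ) = 1 from rfl, show ((mb6 m 5).2 : ℕ) = m from rfl]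
    apply I1 m _ _ (2:ℤ) hm (by omega) (by omega)
    push_cast
    linear_combination hz
  · rw [show 2*t+6+1-(t+3) = t+4 by omega,
        arrG_mid m _ t _ (t+3) _ (by omega) (by omega),
        arrG_mid m _ t _ (t+4) _ (by omega) (by omega),
        show t+3-t = 3 by omega, show t+4-t = 4 by omega,
        show ((mb6 m 3).1 : ℕ) = 2*m-1 from rfl, show ((mb6 m 3).2 : ℕ) = 3 from rfl,
        show ((mb6 m 4).1 : ℕ) = 2*m-1 from rfl, show ((mb6 m 4).2 : ℕ) = 0 from rfl]
    apply I1 m _ _ (2*(m:ℤ)) hm (by omega) (by omega)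
    push_cast [Nat.cast_sub (show 1 ≤ 2*m by omega)]
    linear_combination (2*(m:ℤ)-1)*hz
  · rw [show 2*t+6+1-(t+4) = t+3 by omega,
        arrG_mid m _ t _ (t+4) _ (by omega) (by omega),
        arrG_mid m _ t _ (t+3) _ (by omega) (by omega),
        show t+3-t = 3 by omega, show t+4-t = 4 by omega,
        show ((mb6 m 3).1 : ℕ) = 2*m-1 from rfl, show ((mb6 m 3).2 : ℕ) = 3 from rfl,
        show ((mb6 m 4).1 : ℕ) = 2*m-1 from rfl, show ((mb6 m 4).2 : ℕ) = 0 from rfl]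
    apply I1 m _ _ (2*(m:ℤ)) hm (by omega) (by omega)
    push_cast [Nat.cast_sub (show 1 ≤ 2*m by omega)]
    linear_combination (2*(m:ℤ)-1)*hz
  · rw [show 2*t+6+1-(t+5) = t+2 by omega,
        arrG_mid m _ t _ (t+5) _ (by omega) (by omega),
        arrG_mid m _ t _ (t+2) _ (by omega) (by omega),
        show t+2-t = 2 by omega, show t+5-t = 5 by omega,
        show ((mb6 m 2).1 : ℕ) = 1 from rfl, show ((mb6 m 2).2 : ℕ) = 1+m from rfl,
        show ((mb6 m 5).1 : ℕ) = 1 from rfl, show ((mb6 m 5).2 : ℕ) = m from rfl]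
    apply I1 m _ _ (2:ℤ) hm (by omega) (by omega)
    push_cast
    linear_combination hz
  · rw [show 2*t+6+1-(t+6) = t+1 by omega,
        arrG_mid m _ t _ (t+6) _ (by omega) (by omega),
        arrG_mid m _ t _ (t+1) _ (by omega) (by omega),
        show t+1-t = 1 by omega, show t+6-t = 6 by omega,
        show ((mb6 m 1).1 : ℕ) = 1 from rfl, show ((mb6 m 1).2 : ℕ) = 1 from rfl,
        show ((mb6 m 6).1 : ℕ) = 1 from rfl, show ((mb6 m 6).2 : ℕ) = 2*m from rfl]
    apply I1 m _ _ (2:ℤ) hm (by omega) (by omega)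
    push_cast
    linear_combination hz

lemma mid5_col (m d t j : ℕ) (hm : 1 ≤ m) (hd : d = 2*t+5) (hj : 1 ≤ j) :
    ∑ i ∈ Finset.Icc (t+1) (d-t), arrG m d t (mb5 m) i j = 5*m+5 := by
  subst hd
  obtain ⟨w, hw⟩ := s5_w m hm
  have hwz : 4*(s5 m : ℤ) + 1 = (2*m+1)*w := by exact_mod_cast hw
  have hI : Finset.Icc (t+1) (2*t+5-t) = {t+1, t+2, t+3, t+4, t+5} := by
    ext x; simp only [Finset.mem_Icc, Finset.mem_insert, Finset.mem_singleton]; omega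
  rw [hI,
      Finset.sum_insert (by simp only [Finset.mem_insert, Finset.mem_singleton]; omega),
      Finset.sum_insert (by simp only [Finset.mem_insert, Finset.mem_singleton]; omega),
      Finset.sum_insert (by simp only [Finset.mem_insert, Finset.mem_singleton]; omega),
      Finset.sum_insert (by simp only [Finset.mem_singleton]; omega),
      Finset.sum_singleton,
      arrG_mid m _ t _ (t+1) _ (by omega) (by omega),
      arrG_mid m _ t _ (t+2) _ (by omega) (by omega),
      arrG_mid m _ t _ (t+3) _ (by omega) (by omega),
      arrG_mid m _ t _ (t+4) _ (by omega) (by omega),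
      arrG_mid m _ t _ (t+5) _ (by omega) (by omega),
      show t+1-t = 1 by omega, show t+2-t = 2 by omega, show t+3-t = 3 by omega,
      show t+4-t = 4 by omega, show t+5-t = 5 by omega,
      show ((mb5 m 1).1 : ℕ) = s5 m from rfl, show ((mb5 m 1).2 : ℕ) = 1+m from rfl,
      show ((mb5 m 2).1 : ℕ) = s5 m from rfl,
      show ((mb5 m 2).2 : ℕ) = 1+m*(m+1)+m from rfl,
      show ((mb5 m 3).1 : ℕ) = 1 from rfl, show ((mb5 m 3).2 : ℕ) = 0 from rfl,
      show ((mb5 m 4).1 : ℕ) = s5 m from rfl, show ((mb5 m 4).2 : ℕ) = 1 from rfl,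
      show ((mb5 m 5).1 : ℕ) = s5 m from rfl,
      show ((mb5 m 5).2 : ℕ) = 1+m*(m+1) from rfl,
      show (s5 m*j+(1+m) : ℕ) = (s5 m*j+1)+m by ring,
      show (s5 m*j+(1+m*(m+1)+m) : ℕ) = (s5 m*j+(1+m*(m+1)))+m by ring]
  have h1 := I2 m (s5 m*j+1) hm (by omega)
  have h2 := I2 m (s5 m*j+(1+m*(m+1))) hm (by omega)
  have h3 : rep (2*m+1) (2*(s5 m*j+(1+m*(m+1)))+2*m)
      = rep (2*m+1) (2*(s5 m*j+1)+2*m+m) := by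
    rw [show 2*(s5 m*j+(1+m*(m+1)))+2*m = (2*(s5 m*j+1)+2*m+m) + (2*m+1)*m by ring]
    exact rep_shift m _ m (by omega)
  rw [h3] at h2
  have h4 := I2 m (2*(s5 m*j+1)+2*m) hm (by omega)
  have h5 := I1 m (2*(2*(s5 m*j+1)+2*m)+2*m) (1*j+0) ((w:ℤ)*j+3) hm (by omega) (by omega)
    (by push_cast; linear_combination (j:ℤ)*hwz)
  omega

lemma mid5_diag (m d t j : ℕ) (hm : 1 ≤ m) (hd : d = 2*t+5) (hj : 1 ≤ j) :
    ∑ i ∈ Finset.Icc (t+1) (d-t),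
      arrG m d t (mb5 m) i (rep (2*m+1) (j + i - 1)) = 5*m+5 := by
  subst hd
  obtain ⟨w, hw⟩ := s5_w m hm
  obtain ⟨qq, hq⟩ := s5_q m hm
  obtain ⟨ee, he⟩ := s5_e m hm
  have hwz : 4*(s5 m : ℤ) + 1 = (2*m+1)*w := by exact_mod_cast hw
  have hs5 := s5_pos m hm
  have hI : Finset.Icc (t+1) (2*t+5-t) = {t+1, t+2, t+3, t+4, t+5} := by
    ext x; simp only [Finset.mem_Icc, Finset.mem_insert, Finset.mem_singleton]; omega
  rw [hI,
      Finset.sum_insert (by simp only [Finset.mem_insert, Finset.mem_singleton]; omega),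
      Finset.sum_insert (by simp only [Finset.mem_insert, Finset.mem_singleton]; omega),
      Finset.sum_insert (by simp only [Finset.mem_insert, Finset.mem_singleton]; omega),
      Finset.sum_insert (by simp only [Finset.mem_singleton]; omega),
      Finset.sum_singleton,
      arrG_mid m _ t _ (t+1) _ (by omega) (by omega),
      arrG_mid m _ t _ (t+2) _ (by omega) (by omega),
      arrG_mid m _ t _ (t+3) _ (by omega) (by omega),
      arrG_mid m _ t _ (t+4) _ (by omega) (by omega),
      arrG_mid m _ t _ (t+5) _ (by omega) (by omega),
      show t+1-t = 1 by omega, show t+2-t = 2 by omega, show t+3-t = 3 by omega,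
      show t+4-t = 4 by omega, show t+5-t = 5 by omega,
      show ((mb5 m 1).1 : ℕ) = s5 m from rfl, show ((mb5 m 1).2 : ℕ) = 1+m from rfl,
      show ((mb5 m 2).1 : ℕ) = s5 m from rfl,
      show ((mb5 m 2).2 : ℕ) = 1+m*(m+1)+m from rfl,
      show ((mb5 m 3).1 : ℕ) = 1 from rfl, show ((mb5 m 3).2 : ℕ) = 0 from rfl,
      show ((mb5 m 4).1 : ℕ) = s5 m from rfl, show ((mb5 m 4).2 : ℕ) = 1 from rfl,
      show ((mb5 m 5).1 : ℕ) = s5 m from rfl,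
      show ((mb5 m 5).2 : ℕ) = 1+m*(m+1) from rfl,
      show j+(t+1)-1 = j+t by omega, show j+(t+2)-1 = j+t+1 by omega,
      show j+(t+3)-1 = j+t+2 by omega, show j+(t+4)-1 = j+t+3 by omega,
      show j+(t+5)-1 = j+t+4 by omega,
      rep_mul_rep m (s5 m) (1+m) (j+t) hs5 (by omega),
      rep_mul_rep m (s5 m) (1+m*(m+1)+m) (j+t+1) hs5 (by omega),
      rep_mul_rep m 1 0 (j+t+2) (by omega) (by omega),
      rep_mul_rep m (s5 m) 1 (j+t+3) hs5 (by omega),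
      rep_mul_rep m (s5 m) (1+m*(m+1)) (j+t+4) hs5 (by omega)]
  have h1 : rep (2*m+1) (s5 m*(j+t+1)+(1+m*(m+1)+m))
      = rep (2*m+1) (s5 m*(j+t)+(1+m)+m) := by
    rw [show s5 m*(j+t+1)+(1+m*(m+1)+m) = (s5 m*(j+t)+(1+m)+m) + (2*m+1)*qq from by
      have e1 : s5 m*(j+t+1) = s5 m*(j+t) + s5 m := by ring
      have e2 : m*(m+1) = m*m + m := by ring
      omega]
    exact rep_shift m _ qq (by omega)
  have h2 := I2 m (s5 m*(j+t)+(1+m)) hm (by omega)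
  rw [← h1] at h2
  have h3 : rep (2*m+1) (s5 m*(j+t+4)+(1+m*(m+1)))
      = rep (2*m+1) (s5 m*(j+t+3)+1+m) := by
    rw [show s5 m*(j+t+4)+(1+m*(m+1)) = (s5 m*(j+t+3)+1+m) + (2*m+1)*qq from by
      have e1 : s5 m*(j+t+4) = s5 m*(j+t+3) + s5 m := by ring
      have e2 : m*(m+1) = m*m + m := by ring
      omega]
    exact rep_shift m _ qq (by omega)
  have h4 := I2 m (s5 m*(j+t+3)+1) hm (by omega)
  rw [← h3] at h4
  have h5 : rep (2*m+1) (2*(s5 m*(j+t+3)+1)+2*m)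
      = rep (2*m+1) (2*(s5 m*(j+t)+(1+m))+2*m+m) := by
    rw [show 2*(s5 m*(j+t+3)+1)+2*m = (2*(s5 m*(j+t)+(1+m))+2*m+m) + (2*m+1)*(3*ee) from by
      have e1 : s5 m*(j+t+3) = s5 m*(j+t) + 3*(s5 m) := by ring
      have e2 : (2*m+1)*(3*ee) = 3*((2*m+1)*ee) := by ring
      omega]
    exact rep_shift m _ _ (by omega)
  rw [h5] at h4
  have h6 := I2 m (2*(s5 m*(j+t)+(1+m))+2*m) hm (by omega)
  have h7 := I1 m (2*(2*(s5 m*(j+t)+(1+m))+2*m)+2*m) (1*(j+t+2)+0) ((w:ℤ)*(j+t)+5)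
    hm (by omega) (by omega)
    (by push_cast; linear_combination ((j:ℤ)+t)*hwz)
  omega

lemma mid5_sym (m d t i j j' : ℕ) (hm : 1 ≤ m) (hd : d = 2*t+5) (hti : t < i)
    (hitd : i + t ≤ d) (hjj' : j + j' = 2*m+2) (hj : 1 ≤ j) (hj' : 1 ≤ j') :
    arrG m d t (mb5 m) i j + arrG m d t (mb5 m) (d+1-i) j' = 2*m+2 := by
  subst hd
  obtain ⟨qq, hq⟩ := s5_q m hm
  have hqz : (s5 m : ℤ) + m*m = (2*m+1)*qq := by exact_mod_cast hq
  have hz : (j:ℤ) + j' = 2*m+2 := by exact_mod_cast hjj'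
  have hcase : i = t+1 ∨ i = t+2 ∨ i = t+3 ∨ i = t+4 ∨ i = t+5 := by omega
  rcases hcase with rfl | rfl | rfl | rfl | rfl
  · rw [show 2*t+5+1-(t+1) = t+5 by omega,
        arrG_mid m _ t _ (t+1) _ (by omega) (by omega),
        arrG_mid m _ t _ (t+5) _ (by omega) (by omega),
        show t+1-t = 1 by omega, show t+5-t = 5 by omega,
        show ((mb5 m 1).1 : ℕ) = s5 m from rfl, show ((mb5 m 1).2 : ℕ) = 1+m from rfl,
        show ((mb5 m 5).1 : ℕ) = s5 m from rfl,
        show ((mb5 m 5).2 : ℕ) = 1+m*(m+1) from rfl]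
    apply I1 m _ _ ((s5 m : ℤ) + qq + 1) hm (by omega) (by omega)
    push_cast
    linear_combination (s5 m : ℤ)*hz + hqz
  · rw [show 2*t+5+1-(t+2) = t+4 by omega,
        arrG_mid m _ t _ (t+2) _ (by omega) (by omega),
        arrG_mid m _ t _ (t+4) _ (by omega) (by omega),
        show t+2-t = 2 by omega, show t+4-t = 4 by omega,
        show ((mb5 m 2).1 : ℕ) = s5 m from rfl,
        show ((mb5 m 2).2 : ℕ) = 1+m*(m+1)+m from rfl,
        show ((mb5 m 4).1 : ℕ) = s5 m from rfl, show ((mb5 m 4).2 : ℕ) = 1 from rfl]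
    apply I1 m _ _ ((s5 m : ℤ) + qq + 1) hm (by omega) (by omega)
    push_cast
    linear_combination (s5 m : ℤ)*hz + hqz
  · rw [show 2*t+5+1-(t+3) = t+3 by omega,
        arrG_mid m _ t _ (t+3) j (by omega) (by omega),
        arrG_mid m _ t _ (t+3) j' (by omega) (by omega),
        show t+3-t = 3 by omega,
        show ((mb5 m 3).1 : ℕ) = 1 from rfl, show ((mb5 m 3).2 : ℕ) = 0 from rfl]
    apply I1 m _ _ (1:ℤ) hm (by omega) (by omega)
    push_cast
    linear_combination hz
  · rw [show 2*t+5+1-(t+4) = t+2 by omega,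
        arrG_mid m _ t _ (t+4) _ (by omega) (by omega),
        arrG_mid m _ t _ (t+2) _ (by omega) (by omega),
        show t+2-t = 2 by omega, show t+4-t = 4 by omega,
        show ((mb5 m 2).1 : ℕ) = s5 m from rfl,
        show ((mb5 m 2).2 : ℕ) = 1+m*(m+1)+m from rfl,
        show ((mb5 m 4).1 : ℕ) = s5 m from rfl, show ((mb5 m 4).2 : ℕ) = 1 from rfl]
    apply I1 m _ _ ((s5 m : ℤ) + qq + 1) hm (by omega) (by omega)
    push_cast
    linear_combination (s5 m : ℤ)*hz + hqz
  · rw [show 2*t+5+1-(t+5) = t+1 by omega,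
        arrG_mid m _ t _ (t+5) _ (by omega) (by omega),
        arrG_mid m _ t _ (t+1) _ (by omega) (by omega),
        show t+1-t = 1 by omega, show t+5-t = 5 by omega,
        show ((mb5 m 1).1 : ℕ) = s5 m from rfl, show ((mb5 m 1).2 : ℕ) = 1+m from rfl,
        show ((mb5 m 5).1 : ℕ) = s5 m from rfl,
        show ((mb5 m 5).2 : ℕ) = 1+m*(m+1) from rfl]
    apply I1 m _ _ ((s5 m : ℤ) + qq + 1) hm (by omega) (by omega)
    push_cast
    linear_combination (s5 m : ℤ)*hz + hqz

lemma master (m d t q Cc Cd : ℕ) (mb : ℕ → ℕ × ℕ) (hm : 1 ≤ m) (hd1 : 1 ≤ d)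
    (ht : t = 2*q) (h2t : 2*t ≤ d)
    (hmb : ∀ k, 1 ≤ k → k ≤ d - 2*t → 1 ≤ (mb k).1 ∧ Nat.Coprime (mb k).1 (2*m+1))
    (hcol : ∀ j, 1 ≤ j → j ≤ 2*m+1 → ∑ i ∈ Finset.Icc (t+1) (d-t), arrG m d t mb i j = Cc)
    (hdiag : ∀ j, 1 ≤ j → j ≤ 2*m+1 →
      ∑ i ∈ Finset.Icc (t+1) (d-t), arrG m d t mb i (rep (2*m+1) (j + i - 1)) = Cd)
    (hsym : ∀ i j j', t < i → i + t ≤ d → j + j' = 2*m+2 → 1 ≤ j → 1 ≤ j' →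
      arrG m d t mb i j + arrG m d t mb (d+1-i) j' = 2*m+2) :
    IsSDKA d (2*m+1) (arrG m d t mb) := by
  subst ht
  refine ⟨?_, ⟨2*q*(2*m+2) + Cc, ?_⟩, ⟨2*q*(2*m+2) + Cd, ?_⟩, ?_⟩
  · -- rows are permutations
    intro i hi
    simp only [Finset.mem_Icc] at hi
    have hrow : ∃ s u, 1 ≤ s ∧ Nat.Coprime s (2*m+1) ∧
        ∀ j, arrG m d (2*q) mb i j = rep (2*m+1) (s*j+u) := by
      by_cases h1 : i ≤ 2*q
      · by_cases h2 : i % 2 = 1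
        · exact ⟨1, _, le_refl 1, Nat.coprime_one_left _, fun j => by
            rw [arrG_top_odd m d (2*q) mb i j h1 h2, one_mul]⟩
        · exact ⟨2*m, _, by omega, cop_2m m, fun j =>
            arrG_top_even m d (2*q) mb i j h1 (by omega)⟩
      · by_cases h3 : d+1-2*q ≤ i
        · by_cases h2 : (d+1-i) % 2 = 1
          · exact ⟨1, _, le_refl 1, Nat.coprime_one_left _, fun j => by
              rw [arrG_bot_odd m d (2*q) mb i (d+1-i) j rfl h1 h3 h2, one_mul]⟩
          · exact ⟨2*m, _, by omega, cop_2m m, fun j =>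
              arrG_bot_even m d (2*q) mb i (d+1-i) j rfl h1 h3 (by omega)⟩
        · obtain ⟨hs1, hs2⟩ := hmb (i-2*q) (by omega) (by omega)
          exact ⟨(mb (i-2*q)).1, (mb (i-2*q)).2, hs1, hs2, fun j =>
            arrG_mid m d (2*q) mb i j h1 h3⟩
    obtain ⟨s, u, hs1, hs2, heq⟩ := hrow
    rw [Finset.image_congr (fun j _ => heq j)]
    exact image_row m s u hm hs1 hs2
  · -- column sums
    intro j hj
    simp only [Finset.mem_Icc] at hj
    have h1 : ∀ k ∈ Finset.Icc 1 q,
        arrG m d (2*q) mb (2*k-1) j + arrG m d (2*q) mb (2*k) j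
          + arrG m d (2*q) mb (d+1-2*k) j + arrG m d (2*q) mb (d+2-2*k) j = 2*(2*m+2) := by
      intro k hk
      simp only [Finset.mem_Icc] at hk
      obtain ⟨b, rfl⟩ : ∃ b, k = b+1 := ⟨k-1, by omega⟩
      rw [show 2*(b+1)-1 = 2*b+1 by omega, show d+1-2*(b+1) = d-(2*b+1) by omega,
          show d+2-2*(b+1) = d-(2*b) by omega, show 2*(b+1) = 2*b+2 by omega]
      have g := gen_col m d (2*q) mb b j hm (by omega) h2t (by omega)
      omega
    calc ∑ i ∈ Finset.Icc 1 d, arrG m d (2*q) mb i j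
        = (∑ k ∈ Finset.Icc 1 q, (arrG m d (2*q) mb (2*k-1) j + arrG m d (2*q) mb (2*k) j
            + arrG m d (2*q) mb (d+1-2*k) j + arrG m d (2*q) mb (d+2-2*k) j))
          + ∑ i ∈ Finset.Icc (2*q+1) (d-2*q), arrG m d (2*q) mb i j :=
          sum_split _ q d (by omega)
      _ = (∑ _k ∈ Finset.Icc 1 q, 2*(2*m+2))
          + ∑ i ∈ Finset.Icc (2*q+1) (d-2*q), arrG m d (2*q) mb i j := by
          rw [Finset.sum_congr rfl h1]
      _ = 2*q*(2*m+2) + Cc := by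
          rw [Finset.sum_const, Nat.card_Icc, hcol j hj.1 hj.2, smul_eq_mul,
              show q+1-1 = q by omega]
          ring
  · -- diagonal sums
    intro j hj
    simp only [Finset.mem_Icc] at hj
    have h1 : ∀ k ∈ Finset.Icc 1 q,
        arrG m d (2*q) mb (2*k-1) (rep (2*m+1) (j + (2*k-1) - 1))
          + arrG m d (2*q) mb (2*k) (rep (2*m+1) (j + (2*k) - 1))
          + arrG m d (2*q) mb (d+1-2*k) (rep (2*m+1) (j + (d+1-2*k) - 1))
          + arrG m d (2*q) mb (d+2-2*k) (rep (2*m+1) (j + (d+2-2*k) - 1)) = 2*(2*m+2) := by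
      intro k hk
      simp only [Finset.mem_Icc] at hk
      obtain ⟨b, rfl⟩ : ∃ b, k = b+1 := ⟨k-1, by omega⟩
      rw [show 2*(b+1)-1 = 2*b+1 by omega, show d+1-2*(b+1) = d-(2*b+1) by omega,
          show d+2-2*(b+1) = d-(2*b) by omega, show 2*(b+1) = 2*b+2 by omega]
      have g := gen_diag m d (2*q) mb b j hm (by omega) h2t (by omega)
      omega
    calc ∑ i ∈ Finset.Icc 1 d, arrG m d (2*q) mb i (rep (2*m+1) (j + i - 1))
        = (∑ k ∈ Finset.Icc 1 q, (arrG m d (2*q) mb (2*k-1) (rep (2*m+1) (j + (2*k-1) - 1))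
            + arrG m d (2*q) mb (2*k) (rep (2*m+1) (j + (2*k) - 1))
            + arrG m d (2*q) mb (d+1-2*k) (rep (2*m+1) (j + (d+1-2*k) - 1))
            + arrG m d (2*q) mb (d+2-2*k) (rep (2*m+1) (j + (d+2-2*k) - 1))))
          + ∑ i ∈ Finset.Icc (2*q+1) (d-2*q), arrG m d (2*q) mb i (rep (2*m+1) (j + i - 1)) :=
          sum_split _ q d (by omega)
      _ = (∑ _k ∈ Finset.Icc 1 q, 2*(2*m+2))
          + ∑ i ∈ Finset.Icc (2*q+1) (d-2*q), arrG m d (2*q) mb i (rep (2*m+1) (j + i - 1)) := by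
          rw [Finset.sum_congr rfl h1]
      _ = 2*q*(2*m+2) + Cd := by
          rw [Finset.sum_const, Nat.card_Icc, hdiag j hj.1 hj.2, smul_eq_mul,
              show q+1-1 = q by omega]
          ring
  · -- symmetry
    intro i hi j hj
    simp only [Finset.mem_Icc] at hi hj
    by_cases h1 : i ≤ 2*q
    · have G := gen_sym m d (2*q) mb i j (2*m+1+1-j) hm (by omega) h1 h2t (by omega)
        (by omega) (by omega)
      omega
    · by_cases h2 : d+1-2*q ≤ i
      · have e : d+1-(d+1-i) = i := by omega
        have G := gen_sym m d (2*q) mb (d+1-i) (2*m+1+1-j) j hm (by omega) (by omega) h2t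
          (by omega) (by omega) (by omega)
        rw [e] at G
        omega
      · have G := hsym i j (2*m+1+1-j) (by omega) (by omega) (by omega) (by omega) (by omega)
        omega

theorem stmt_7 (n d : ℕ) (hn : 3 ≤ n) (hodd : Odd n) (hd : 3 ≤ d) (hdn : d ≤ n) :
    ∃ a : ℕ → ℕ → ℕ, IsSDKA d n a := by
  obtain ⟨m, rfl⟩ := hodd
  have hm : 1 ≤ m := by omega
  have h4 : d % 4 = 0 ∨ d % 4 = 1 ∨ d % 4 = 2 ∨ d % 4 = 3 := by omega
  rcases h4 with h|h|h|h
  · -- d ≡ 0 (mod 4)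
    obtain ⟨b, rfl⟩ : ∃ b, d = 4*b := ⟨d/4, by omega⟩
    refine ⟨arrG m (4*b) (2*b) mb0,
      master m (4*b) (2*b) b 0 0 mb0 hm (by omega) (by omega) (by omega) ?_ ?_ ?_ ?_⟩
    · intro k hk1 hk2
      exact absurd hk2 (by omega)
    · intro j hj1 hj2
      rw [show Finset.Icc (2*b+1) (4*b-2*b) = ∅ from Finset.Icc_eq_empty (by omega),
          Finset.sum_empty]
    · intro j hj1 hj2
      rw [show Finset.Icc (2*b+1) (4*b-2*b) = ∅ from Finset.Icc_eq_empty (by omega),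
          Finset.sum_empty]
    · intro i j j' h1 h2 h3 h4 h5
      exact absurd h2 (by omega)
  · -- d ≡ 1 (mod 4)
    obtain ⟨b, rfl⟩ : ∃ b, d = 4*b+5 := ⟨(d-5)/4, by omega⟩
    refine ⟨arrG m (4*b+5) (2*b) (mb5 m),
      master m (4*b+5) (2*b) b (5*m+5) (5*m+5) (mb5 m) hm (by omega) (by omega) (by omega)
        ?_ ?_ ?_ ?_⟩
    · intro k hk1 hk2
      have hk : k = 1 ∨ k = 2 ∨ k = 3 ∨ k = 4 ∨ k = 5 := by omega
      rcases hk with rfl|rfl|rfl|rfl|rfl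
      · rw [show ((mb5 m 1).1 : ℕ) = s5 m from rfl]
        exact ⟨s5_pos m hm, s5_coprime m hm⟩
      · rw [show ((mb5 m 2).1 : ℕ) = s5 m from rfl]
        exact ⟨s5_pos m hm, s5_coprime m hm⟩
      · rw [show ((mb5 m 3).1 : ℕ) = 1 from rfl]
        exact ⟨le_refl 1, Nat.coprime_one_left _⟩
      · rw [show ((mb5 m 4).1 : ℕ) = s5 m from rfl]
        exact ⟨s5_pos m hm, s5_coprime m hm⟩
      · rw [show ((mb5 m 5).1 : ℕ) = s5 m from rfl]
        exact ⟨s5_pos m hm, s5_coprime m hm⟩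
    · intro j hj1 hj2
      exact mid5_col m (4*b+5) (2*b) j hm (by omega) hj1
    · intro j hj1 hj2
      exact mid5_diag m (4*b+5) (2*b) j hm (by omega) hj1
    · intro i j j' h1 h2 h3 h4 h5
      exact mid5_sym m (4*b+5) (2*b) i j j' hm (by omega) h1 h2 h3 h4 h5
  · -- d ≡ 2 (mod 4)
    obtain ⟨b, rfl⟩ : ∃ b, d = 4*b+6 := ⟨(d-6)/4, by omega⟩
    refine ⟨arrG m (4*b+6) (2*b) (mb6 m),
      master m (4*b+6) (2*b) b (6*m+6) (6*m+6) (mb6 m) hm (by omega) (by omega) (by omega)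
        ?_ ?_ ?_ ?_⟩
    · intro k hk1 hk2
      have hk : k = 1 ∨ k = 2 ∨ k = 3 ∨ k = 4 ∨ k = 5 ∨ k = 6 := by omega
      rcases hk with rfl|rfl|rfl|rfl|rfl|rfl
      · rw [show ((mb6 m 1).1 : ℕ) = 1 from rfl]
        exact ⟨le_refl 1, Nat.coprime_one_left _⟩
      · rw [show ((mb6 m 2).1 : ℕ) = 1 from rfl]
        exact ⟨le_refl 1, Nat.coprime_one_left _⟩
      · rw [show ((mb6 m 3).1 : ℕ) = 2*m-1 from rfl]
        exact ⟨by omega, cop_2m1 m hm⟩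
      · rw [show ((mb6 m 4).1 : ℕ) = 2*m-1 from rfl]
        exact ⟨by omega, cop_2m1 m hm⟩
      · rw [show ((mb6 m 5).1 : ℕ) = 1 from rfl]
        exact ⟨le_refl 1, Nat.coprime_one_left _⟩
      · rw [show ((mb6 m 6).1 : ℕ) = 1 from rfl]
        exact ⟨le_refl 1, Nat.coprime_one_left _⟩
    · intro j hj1 hj2
      exact mid6_col m (4*b+6) (2*b) j hm (by omega) hj1
    · intro j hj1 hj2
      exact mid6_diag m (4*b+6) (2*b) j hm (by omega) hj1
    · intro i j j' h1 h2 h3 h4 h5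
      exact mid6_sym m (4*b+6) (2*b) i j j' hm (by omega) h1 h2 h3 h4 h5
  · -- d ≡ 3 (mod 4)
    obtain ⟨b, rfl⟩ : ∃ b, d = 4*b+3 := ⟨(d-3)/4, by omega⟩
    refine ⟨arrG m (4*b+3) (2*b) (mb3 m),
      master m (4*b+3) (2*b) b (3*m+3) (3*m+3) (mb3 m) hm (by omega) (by omega) (by omega)
        ?_ ?_ ?_ ?_⟩
    · intro k hk1 hk2
      have hk : k = 1 ∨ k = 2 ∨ k = 3 := by omega
      rcases hk with rfl|rfl|rfl
      · rw [show ((mb3 m 1).1 : ℕ) = m from rfl]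
        exact ⟨hm, cop_m m⟩
      · rw [show ((mb3 m 2).1 : ℕ) = 1 from rfl]
        exact ⟨le_refl 1, Nat.coprime_one_left _⟩
      · rw [show ((mb3 m 3).1 : ℕ) = m from rfl]
        exact ⟨hm, cop_m m⟩
    · intro j hj1 hj2
      exact mid3_col m (4*b+3) (2*b) j hm (by omega) hj1
    · intro j hj1 hj2
      exact mid3_diag m (4*b+3) (2*b) j hm (by omega) hj1
    · intro i j j' h1 h2 h3 h4 h5
      exact mid3_sym m (4*b+3) (2*b) i j j' hm (by omega) h1 h2 h3 h4 h5
end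

section
/- For any odd integer n ≥ 3, any integer t with 3 ≤ t ≤ n, and any nonnegative integer l, there exists a symmetric forward diagonals array SFD(t,n) over the interval [1+l, nt+l]. -/
set_option linter.unusedSectionVars false
set_option linter.unusedVariables false
set_option maxHeartbeats 1000000


def VV (n : ℕ) (z : ZMod n) : ℕ := (z - 1).val + 1

section VVlemmas
variable (n : ℕ) [NeZero n]

lemma VV_pos (z : ZMod n) : 1 ≤ VV n z := Nat.le_add_left 1 _

lemma VV_le (z : ZMod n) : VV n z ≤ n := by
  have := ZMod.val_lt (z - 1); unfold VV; omega

lemma VV_cast (z : ZMod n) : ((VV n z : ℕ) : ZMod n) = z := by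
  unfold VV
  push_cast
  rw [ZMod.natCast_val, ZMod.cast_id]
  ring

lemma VV_eq (z : ZMod n) (m : ℕ) (h1 : 1 ≤ m) (h2 : m ≤ n) (hz : z = (m : ZMod n)) :
    VV n z = m := by
  have hlt : m - 1 < n := by omega
  have e : z - 1 = ((m - 1 : ℕ) : ZMod n) := by
    rw [hz, Nat.cast_sub h1]; push_cast; ring
  unfold VV
  rw [e, ZMod.val_natCast, Nat.mod_eq_of_lt hlt]
  omega

lemma VV_zero (h1 : 1 ≤ n) : VV n 0 = n :=
  VV_eq n 0 n h1 le_rfl (ZMod.natCast_self n).symm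

lemma VV_inj {x y : ZMod n} (h : VV n x = VV n y) : x = y := by
  rw [← VV_cast n x, ← VV_cast n y, h]

lemma VV_A (x : ZMod n) : VV n x + VV n (1 - x) = n + 1 := by
  have h1 : 1 ≤ n := Nat.one_le_iff_ne_zero.mpr (NeZero.ne n)
  have hul : (x - 1).val < n := ZMod.val_lt _
  have e : VV n (1 - x) = n - (x - 1).val := by
    refine VV_eq n _ _ (by omega) (by omega) ?_
    rw [Nat.cast_sub (le_of_lt hul), ZMod.natCast_self, ZMod.natCast_val, ZMod.cast_id]
    ring
  rw [show VV n x + VV n (1 - x) = ((x-1).val + 1) + VV n (1-x) from rfl, e]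
  omega

lemma VV_A2 (x : ZMod n) : VV n x + VV n (2 - x) = if x = 1 then 2 else n + 2 := by
  have h1 : 1 ≤ n := Nat.one_le_iff_ne_zero.mpr (NeZero.ne n)
  by_cases hx : x = 1
  · rw [if_pos hx, hx]
    have e1 : VV n (1 : ZMod n) = 1 := VV_eq n _ _ le_rfl h1 (by push_cast; ring)
    have e2 : (2 - 1 : ZMod n) = 1 := by ring
    rw [e2, e1]
  · rw [if_neg hx]
    have hul : (x - 1).val < n := ZMod.val_lt _
    have hu0 : (x - 1).val ≠ 0 := by
      intro h0
      apply hx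
      have : x - 1 = 0 := by rwa [ZMod.val_eq_zero] at h0
      linear_combination this
    have e : VV n (2 - x) = n - (x - 1).val + 1 := by
      refine VV_eq n _ _ (by omega) (by omega) ?_
      rw [Nat.cast_add, Nat.cast_sub (le_of_lt hul), Nat.cast_one, ZMod.natCast_self,
        ZMod.natCast_val, ZMod.cast_id]
      ring
    rw [show VV n x + VV n (2 - x) = ((x-1).val + 1) + VV n (2-x) from rfl, e]
    omega

lemma VV_C (h : ℕ) (hn : n = 2*h+1) (x : ZMod n) :
    VV n x + VV n (x + (h : ZMod n)) = h + 1 + VV n (2*x - 1) := by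
  have hr1 : 1 ≤ VV n x := VV_pos n x
  have hr2 : VV n x ≤ n := VV_le n x
  set r := VV n x with hr
  have hx : x = ((r : ℕ) : ZMod n) := (VV_cast n x).symm
  rcases le_or_gt r (h+1) with hc | hc
  · have e1 : VV n (x + (h : ZMod n)) = r + h :=
      VV_eq n _ _ (by omega) (by omega) (by rw [hx]; push_cast; ring)
    have e2 : VV n (2*x - 1) = 2*r - 1 :=
      VV_eq n _ _ (by omega) (by omega) (by
        rw [hx, Nat.cast_sub (by omega : 1 ≤ 2*r)]; push_cast; ring)
    omega
  · have e1 : VV n (x + (h : ZMod n)) = r + h - n :=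
      VV_eq n _ _ (by omega) (by omega) (by
        rw [hx, Nat.cast_sub (by omega : n ≤ r + h), ZMod.natCast_self]
        push_cast; ring)
    have e2 : VV n (2*x - 1) = 2*r - 1 - n :=
      VV_eq n _ _ (by omega) (by omega) (by
        rw [hx, Nat.cast_sub (by omega : n ≤ 2*r - 1), Nat.cast_sub (by omega : 1 ≤ 2*r),
          ZMod.natCast_self]
        push_cast; ring)
    omega

lemma VV_D (h : ℕ) (hn : n = 2*h+1) (x : ZMod n) :
    VV n x + VV n (x + (h : ZMod n) + 1) = h + 1 + VV n (2*x) := by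
  have hr1 : 1 ≤ VV n x := VV_pos n x
  have hr2 : VV n x ≤ n := VV_le n x
  set r := VV n x with hr
  have hx : x = ((r : ℕ) : ZMod n) := (VV_cast n x).symm
  rcases le_or_gt r h with hc | hc
  · have e1 : VV n (x + (h : ZMod n) + 1) = r + h + 1 :=
      VV_eq n _ _ (by omega) (by omega) (by rw [hx]; push_cast; ring)
    have e2 : VV n (2*x) = 2*r :=
      VV_eq n _ _ (by omega) (by omega) (by rw [hx]; push_cast; ring)
    omega
  · have e1 : VV n (x + (h : ZMod n) + 1) = r + h + 1 - n :=
      VV_eq n _ _ (by omega) (by omega) (by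
        rw [hx, Nat.cast_sub (by omega : n ≤ r + h + 1), ZMod.natCast_self]
        push_cast; ring)
    have e2 : VV n (2*x) = 2*r - n :=
      VV_eq n _ _ (by omega) (by omega) (by
        rw [hx, Nat.cast_sub (by omega : n ≤ 2*r), ZMod.natCast_self]
        push_cast; ring)
    omega

lemma VV_E (h : ℕ) (hn : n = 2*h+1) (hh : 1 ≤ h) (x : ZMod n) :
    VV n x + VV n (x + (h : ZMod n) + 2) = h + VV n (2*x + 2) + (if x = 0 then n else 0) := by
  by_cases hx0 : x = 0
  · rw [if_pos hx0, hx0]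
    have e0 : VV n (0 : ZMod n) = n := VV_zero n (by omega)
    have e1 : VV n (0 + (h : ZMod n) + 2) = h + 2 :=
      VV_eq n _ _ (by omega) (by omega) (by push_cast; ring)
    have e2 : VV n (2*(0 : ZMod n) + 2) = 2 :=
      VV_eq n _ _ (by omega) (by omega) (by push_cast; ring)
    rw [e0, e1, e2]
    omega
  · rw [if_neg hx0]
    have hr1 : 1 ≤ VV n x := VV_pos n x
    have hr2 : VV n x ≤ n := VV_le n x
    set r := VV n x with hr
    have hx : x = ((r : ℕ) : ZMod n) := (VV_cast n x).symm
    have hrn : r ≤ n - 1 := by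
      rcases eq_or_lt_of_le hr2 with he | hlt
      · exfalso; apply hx0; rw [hx, he, ZMod.natCast_self]
      · omega
    rcases le_or_gt r (h-1) with hc | hc
    · have e1 : VV n (x + (h : ZMod n) + 2) = r + h + 2 :=
        VV_eq n _ _ (by omega) (by omega) (by rw [hx]; push_cast; ring)
      have e2 : VV n (2*x + 2) = 2*r + 2 :=
        VV_eq n _ _ (by omega) (by omega) (by rw [hx]; push_cast; ring)
      omega
    · have e1 : VV n (x + (h : ZMod n) + 2) = r + h + 2 - n :=
        VV_eq n _ _ (by omega) (by omega) (by
          rw [hx, Nat.cast_sub (by omega : n ≤ r + h + 2), ZMod.natCast_self]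
          push_cast; ring)
      have e2 : VV n (2*x + 2) = 2*r + 2 - n :=
        VV_eq n _ _ (by omega) (by omega) (by
          rw [hx, Nat.cast_sub (by omega : n ≤ 2*r + 2), ZMod.natCast_self]
          push_cast; ring)
      omega

end VVlemmas


def Good (n : ℕ) (t : ℕ) (b c : ℕ → ZMod n) : Prop :=
  (∀ i, 1 ≤ i → i ≤ t → IsUnit (b i)) ∧
  (∀ i, 1 ≤ i → i ≤ t → b (t+1-i) = b i ∧ b i + (c i + c (t+1-i)) = 1) ∧
  (∃ K, ∀ z : ZMod n, ∑ i ∈ Finset.Icc 1 t, VV n (b i * z + c i) = K) ∧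
  (∃ K, ∀ z : ZMod n, ∑ i ∈ Finset.Icc 1 t, VV n (b i * (z + (i : ZMod n)) + c i) = K)

section Bases

lemma hn0' (n h : ℕ) (hn : n = 2*h+1) : 2*(h : ZMod n) + 1 = 0 := by
  have h0 : ((2*h+1 : ℕ) : ZMod n) = 0 := by rw [← hn]; exact ZMod.natCast_self n
  push_cast at h0
  linear_combination h0

lemma unit_h (n h : ℕ) [NeZero n] (hn : n = 2*h+1) (hh : 1 ≤ h) : IsUnit ((h : ℕ) : ZMod n) := by
  have hcop : Nat.Coprime h n := by
    have := (Nat.coprime_add_mul_left_right h 1 2).mpr (Nat.coprime_one_right h)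
    rwa [show 1 + h * 2 = n from by omega] at this
  exact ⟨ZMod.unitOfCoprime h hcop, ZMod.coe_unitOfCoprime h hcop⟩

lemma unit_two (n h : ℕ) [NeZero n] (hn : n = 2*h+1) : IsUnit (2 : ZMod n) := by
  have hcop2 : Nat.Coprime 2 n := by
    have := (Nat.coprime_add_mul_left_right 2 1 h).mpr (Nat.coprime_one_right 2)
    rwa [show 1 + 2 * h = n from by omega] at this
  have h2 : IsUnit ((2 : ℕ) : ZMod n) :=
    ⟨ZMod.unitOfCoprime 2 hcop2, ZMod.coe_unitOfCoprime 2 hcop2⟩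
  rwa [show (((2:ℕ) : ZMod n)) = (2 : ZMod n) from by push_cast; ring] at h2

lemma base3 (n h : ℕ) [NeZero n] (hn : n = 2*h+1) (hh : 1 ≤ h) : ∃ b c : ℕ → ZMod n, Good n 3 b c := by
  have hn0 : 2*(h : ZMod n) + 1 = 0 := hn0' n h hn
  have hI : Finset.Icc 1 3 = {1, 2, 3} := by decide
  refine ⟨fun i => if i = 2 then 1 else (h : ZMod n),
          fun i => if i = 1 then (h : ZMod n) + 1 else if i = 2 then 0 else 1,
          ?_, ?_, ?_, ?_⟩
  · intro i h1 h2
    interval_cases i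
    · norm_num; exact unit_h n h hn hh
    · norm_num
    · norm_num; exact unit_h n h hn hh
  · intro i h1 h2
    interval_cases i
    · exact ⟨by norm_num, by norm_num; linear_combination hn0⟩
    · exact ⟨by norm_num, by norm_num⟩
    · exact ⟨by norm_num, by norm_num; linear_combination hn0⟩
  · refine ⟨n + h + 2, fun z => ?_⟩
    rw [hI, Finset.sum_insert (by decide), Finset.sum_insert (by decide),
      Finset.sum_singleton]
    norm_num
    have hC := VV_C n h hn ((h : ZMod n) * z + 1)
    have hA := VV_A n z
    have b1 : VV n (2*((h : ZMod n)*z+1) - 1) = VV n (1 - z) := by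
      rw [show (2*((h : ZMod n)*z+1) - 1) = 1 - z from by linear_combination z * hn0]
    ring_nf
    ring_nf at hC hA b1
    omega
  · refine ⟨n + h + 2, fun z => ?_⟩
    rw [hI, Finset.sum_insert (by decide), Finset.sum_insert (by decide),
      Finset.sum_singleton]
    norm_num
    have hC := VV_C n h hn ((h : ZMod n) * (z+1) + ((h : ZMod n)+1))
    have hA := VV_A n (z + 2)
    have b1 : VV n (2*((h : ZMod n)*(z+1) + ((h : ZMod n)+1)) - 1) = VV n (1 - (z+2)) := by
      rw [show (2*((h : ZMod n)*(z+1) + ((h : ZMod n)+1)) - 1) = 1 - (z+2) from by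
        linear_combination (z+2) * hn0]
    ring_nf
    ring_nf at hC hA b1
    omega

lemma base4 (n h : ℕ) [NeZero n] (hn : n = 2*h+1) (hh : 1 ≤ h) :
    ∃ b c : ℕ → ZMod n, Good n 4 b c := by
  have hI : Finset.Icc 1 4 = {1, 2, 3, 4} := by decide
  refine ⟨fun i => if i = 1 ∨ i = 4 then 1 else -1,
          fun i => if i = 1 then 1 else if i = 2 then 0 else if i = 3 then 2 else -1,
          ?_, ?_, ?_, ?_⟩
  · intro i h1 h2
    interval_cases i <;> norm_num
  · intro i h1 h2
    interval_cases i <;> norm_num <;> ring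
  · refine ⟨(n+1) + (n+1), fun z => ?_⟩
    rw [hI, Finset.sum_insert (by decide), Finset.sum_insert (by decide),
      Finset.sum_insert (by decide), Finset.sum_singleton]
    norm_num
    have hA1 := VV_A n (z + 1)
    have hA2 := VV_A n (2 - z)
    ring_nf
    ring_nf at hA1 hA2
    omega
  · refine ⟨(n+1) + (n+1), fun z => ?_⟩
    rw [hI, Finset.sum_insert (by decide), Finset.sum_insert (by decide),
      Finset.sum_insert (by decide), Finset.sum_singleton]
    norm_num
    have hA1 := VV_A n (z + 2)
    have hA2 := VV_A n (z + 3)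
    ring_nf
    ring_nf at hA1 hA2
    omega

lemma base5 (n h : ℕ) [NeZero n] (hn : n = 2*h+1) (hh : 1 ≤ h) : ∃ b c : ℕ → ZMod n, Good n 5 b c := by
  have hn0 : 2*(h : ZMod n) + 1 = 0 := hn0' n h hn
  have hu : IsUnit ((h : ℕ) : ZMod n) := unit_h n h hn hh
  have hI : Finset.Icc 1 5 = {1, 2, 3, 4, 5} := by decide
  refine ⟨fun i => if i = 1 ∨ i = 5 then (h : ZMod n) else if i = 3 then -1 else 1,
          fun i => if i = 1 then 0 else if i = 2 then 1 else if i = 3 then 1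
            else if i = 4 then -1 else 1 - (h : ZMod n),
          ?_, ?_, ?_, ?_⟩
  · intro i h1 h2
    interval_cases i
    · norm_num; exact hu
    · norm_num
    · norm_num
    · norm_num
    · norm_num; exact hu
  · intro i h1 h2
    interval_cases i
    · exact ⟨by norm_num, by norm_num⟩
    · exact ⟨by norm_num, by norm_num⟩
    · exact ⟨by norm_num, by norm_num⟩
    · exact ⟨by norm_num, by norm_num⟩
    · exact ⟨by norm_num, by norm_num⟩
  · refine ⟨n + n + h + 3, fun z => ?_⟩
    rw [hI, Finset.sum_insert (by decide), Finset.sum_insert (by decide),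
      Finset.sum_insert (by decide), Finset.sum_insert (by decide), Finset.sum_singleton]
    norm_num
    have hE := VV_E n h hn hh ((h : ZMod n) * z)
    have hA2 := VV_A2 n (z + 1)
    have hA := VV_A n (z - 1)
    have b5 : VV n ((h : ZMod n)*z + (1 - (h : ZMod n)))
        = VV n ((h : ZMod n)*z + (h : ZMod n) + 2) := by
      rw [show ((h : ZMod n)*z + (1 - (h : ZMod n))) = ((h : ZMod n)*z + (h : ZMod n) + 2) from by
        linear_combination -hn0]
    have b6 : VV n (2*((h : ZMod n)*z) + 2) = VV n (1 - (z - 1)) := by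
      rw [show (2*((h : ZMod n)*z) + 2) = 1 - (z - 1) from by linear_combination z * hn0]
    by_cases hz : z = 0
    · rw [if_pos (show (h : ZMod n)*z = 0 from by rw [hz]; ring)] at hE
      rw [if_pos (show z + 1 = 1 from by rw [hz]; ring)] at hA2
      ring_nf
      ring_nf at hE hA2 hA b5 b6
      omega
    · rw [if_neg (show ¬((h : ZMod n)*z = 0) from fun He => hz
        (hu.mul_left_cancel (by rw [mul_zero]; exact He)))] at hE
      rw [if_neg (show ¬(z + 1 = 1) from fun He => hz (by linear_combination He))] at hA2
      ring_nf
      ring_nf at hE hA2 hA b5 b6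
      omega
  · refine ⟨n + n + h + 3, fun z => ?_⟩
    rw [hI, Finset.sum_insert (by decide), Finset.sum_insert (by decide),
      Finset.sum_insert (by decide), Finset.sum_insert (by decide), Finset.sum_singleton]
    norm_num
    have hD := VV_D n h hn ((h : ZMod n)*(z+5) + (1 - (h : ZMod n)))
    have hA := VV_A n (z + 3)
    have b1 : VV n ((h : ZMod n)*(z+1))
        = VV n (((h : ZMod n)*(z+5) + (1 - (h : ZMod n))) + (h : ZMod n) + 1) := by
      rw [show ((h : ZMod n)*(z+1)) = (((h : ZMod n)*(z+5) + (1 - (h : ZMod n))) + (h : ZMod n) + 1)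
        from by linear_combination (-2 : ZMod n) * hn0]
    have b2 : VV n (2*((h : ZMod n)*(z+5) + (1 - (h : ZMod n)))) = VV n (1 - (z + 3)) := by
      rw [show (2*((h : ZMod n)*(z+5) + (1 - (h : ZMod n)))) = 1 - (z + 3) from by
        linear_combination (z + 4) * hn0]
    ring_nf
    ring_nf at hD hA b1 b2
    omega

lemma base6 (n h : ℕ) [NeZero n] (hn : n = 2*h+1) (hh : 1 ≤ h) : ∃ b c : ℕ → ZMod n, Good n 6 b c := by
  have hn0 : 2*(h : ZMod n) + 1 = 0 := hn0' n h hn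
  have hu2 : IsUnit (2 : ZMod n) := unit_two n h hn
  have hI : Finset.Icc 1 6 = {1, 2, 3, 4, 5, 6} := by decide
  refine ⟨fun i => if i = 3 ∨ i = 4 then -2 else 1,
          fun i => if i = 1 then 1 else if i = 2 then 1 + (h : ZMod n) else if i = 3 then 3
            else if i = 4 then 0 else if i = 5 then -(1 + (h : ZMod n)) else -1,
          ?_, ?_, ?_, ?_⟩
  · intro i h1 h2
    interval_cases i
    · norm_num
    · norm_num
    · norm_num; exact hu2
    · norm_num; exact hu2
    · norm_num
    · norm_num
  · intro i h1 h2
    interval_cases i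
    · exact ⟨by norm_num, by norm_num⟩
    · exact ⟨by norm_num, by norm_num⟩
    · exact ⟨by norm_num, by norm_num⟩
    · exact ⟨by norm_num, by norm_num⟩
    · exact ⟨by norm_num, by norm_num⟩
    · exact ⟨by norm_num, by norm_num⟩
  · refine ⟨n + n + 2*h + 4, fun z => ?_⟩
    rw [hI, Finset.sum_insert (by decide), Finset.sum_insert (by decide),
      Finset.sum_insert (by decide), Finset.sum_insert (by decide),
      Finset.sum_insert (by decide), Finset.sum_singleton]
    norm_num
    have hC1 := VV_C n h hn (z + 1)
    have hA1 := VV_A n (2*(z+1) - 1)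
    have hC2 := VV_C n h hn (z + -(1 + (h : ZMod n)))
    have hA2 := VV_A n (2*(z + -(1 + (h : ZMod n))) - 1)
    have b1 : VV n ((-2)*z + 3) = VV n (1 - (2*(z + -(1 + (h : ZMod n))) - 1)) := by
      rw [show ((-2)*z + 3 : ZMod n) = 1 - (2*(z + -(1 + (h : ZMod n))) - 1) from by
        linear_combination -hn0]
    ring_nf
    ring_nf at hC1 hA1 hC2 hA2 b1
    omega
  · refine ⟨n + n + 2*h + 4, fun z => ?_⟩
    rw [hI, Finset.sum_insert (by decide), Finset.sum_insert (by decide),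
      Finset.sum_insert (by decide), Finset.sum_insert (by decide),
      Finset.sum_insert (by decide), Finset.sum_singleton]
    norm_num
    have hD1 := VV_D n h hn (z + 2)
    have hA1 := VV_A n (2*(z+2))
    have hD2 := VV_D n h hn ((z+5) + -(1 + (h : ZMod n)))
    have hA2 := VV_A n (2*((z+5) + -(1 + (h : ZMod n))))
    have b2 : VV n ((-2)*(z+4) + 0) = VV n (1 - 2*((z+5) + -(1 + (h : ZMod n)))) := by
      rw [show ((-2)*(z+4) + 0 : ZMod n) = 1 - 2*((z+5) + -(1 + (h : ZMod n))) from by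
        linear_combination -hn0]
    ring_nf
    ring_nf at hD1 hA1 hD2 hA2 b2
    omega

end Bases



lemma stepQuad (n h : ℕ) [NeZero n] (hn : n = 2*h+1) (t : ℕ) (ht : 7 ≤ t)
    (prev : ∃ b c : ℕ → ZMod n, Good n (t - 4) b c) :
    ∃ b c : ℕ → ZMod n, Good n t b c := by
  obtain ⟨b, c, hu, hs, ⟨K1, hK1⟩, ⟨K2, hK2⟩⟩ := prev
  have hn0 : 2*(h : ZMod n) + 1 = 0 := hn0' n h hn
  set cp : ZMod n := ((t : ZMod n) - 2) * ((h : ZMod n) + 1) with hcp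
  have h2cp : 2 * cp = (t : ZMod n) - 2 := by
    rw [hcp]; linear_combination ((t : ZMod n) - 2) * hn0
  set b' : ℕ → ZMod n :=
    fun i => if i = 1 then 1 else if i = t then 1 else if i = 2 then -1
      else if i = t - 1 then -1 else b (i - 2) with hb'
  set c' : ℕ → ZMod n :=
    fun i => if i = 1 then cp else if i = 2 then 1 - cp else if i = t - 1 then 1 + cp
      else if i = t then -cp else c (i - 2) with hc'
  have eb1 : b' 1 = 1 := by
    rw [hb']; beta_reduce; split_ifs <;> first | rfl | omega
  have eb2 : b' 2 = -1 := by
    rw [hb']; beta_reduce; split_ifs <;> first | rfl | omega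
  have ebt1 : b' (t-1) = -1 := by
    rw [hb']; beta_reduce; split_ifs <;> first | rfl | omega
  have ebt : b' t = 1 := by
    rw [hb']; beta_reduce; split_ifs <;> first | rfl | omega
  have ebm : ∀ i, 3 ≤ i → i ≤ t - 2 → b' i = b (i - 2) := by
    intro i h3 h4; rw [hb']; beta_reduce; split_ifs <;> first | rfl | omega
  have ec1 : c' 1 = cp := by
    rw [hc']; beta_reduce; split_ifs <;> first | rfl | omega
  have ec2 : c' 2 = 1 - cp := by
    rw [hc']; beta_reduce; split_ifs <;> first | rfl | omega
  have ect1 : c' (t-1) = 1 + cp := by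
    rw [hc']; beta_reduce; split_ifs <;> first | rfl | omega
  have ect : c' t = -cp := by
    rw [hc']; beta_reduce; split_ifs <;> first | rfl | omega
  have ecm : ∀ i, 3 ≤ i → i ≤ t - 2 → c' i = c (i - 2) := by
    intro i h3 h4; rw [hc']; beta_reduce; split_ifs <;> first | rfl | omega
  have hset : Finset.Icc 1 t
      = insert 1 (insert 2 (insert (t-1) (insert t (Finset.Icc 3 (t-2))))) := by
    ext x; simp only [Finset.mem_insert, Finset.mem_Icc]; omega
  have hmem1 : (1:ℕ) ∉ insert 2 (insert (t-1) (insert t (Finset.Icc 3 (t-2)))) := by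
    simp only [Finset.mem_insert, Finset.mem_Icc]; omega
  have hmem2 : (2:ℕ) ∉ insert (t-1) (insert t (Finset.Icc 3 (t-2))) := by
    simp only [Finset.mem_insert, Finset.mem_Icc]; omega
  have hmem3 : (t-1) ∉ insert t (Finset.Icc 3 (t-2)) := by
    simp only [Finset.mem_insert, Finset.mem_Icc]; omega
  have hmem4 : t ∉ Finset.Icc 3 (t-2) := by simp only [Finset.mem_Icc]; omega
  have hmap : Finset.Icc 3 (t-2) = Finset.map (addRightEmbedding 2) (Finset.Icc 1 (t-4)) := by
    rw [Finset.map_add_right_Icc]; congr 1 <;> omega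
  refine ⟨b', c', ?_, ?_, ?_, ?_⟩
  · intro i h1 h2
    rcases (by omega : i = 1 ∨ i = 2 ∨ i = t - 1 ∨ i = t ∨ (3 ≤ i ∧ i ≤ t - 2)) with
       rfl | rfl | rfl | hit | ⟨h3, h4⟩
    · rw [eb1]; exact isUnit_one
    · rw [eb2]; exact isUnit_one.neg
    · rw [ebt1]; exact isUnit_one.neg
    · rw [hit, ebt]; exact isUnit_one
    · rw [ebm i h3 h4]; exact hu (i-2) (by omega) (by omega)
  · intro i h1 h2
    rcases (by omega : i = 1 ∨ i = 2 ∨ i = t - 1 ∨ i = t ∨ (3 ≤ i ∧ i ≤ t - 2)) with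
       rfl | rfl | rfl | hit | ⟨h3, h4⟩
    · rw [show t + 1 - 1 = t from by omega, ebt, eb1, ec1, ect]; exact ⟨rfl, by ring⟩
    · rw [show t + 1 - 2 = t - 1 from by omega, ebt1, eb2, ec2, ect1]; exact ⟨rfl, by ring⟩
    · rw [show t + 1 - (t-1) = 2 from by omega, eb2, ebt1, ect1, ec2]; exact ⟨rfl, by ring⟩
    · rw [hit, show t + 1 - t = 1 from by omega, eb1, ebt, ect, ec1]; exact ⟨rfl, by ring⟩
    · rw [ebm i h3 h4, ebm (t+1-i) (by omega) (by omega), ecm i h3 h4,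
        ecm (t+1-i) (by omega) (by omega)]
      obtain ⟨s1, s2⟩ := hs (i-2) (by omega) (by omega)
      rw [show t - 4 + 1 - (i - 2) = t + 1 - i - 2 from by omega] at s1 s2
      exact ⟨s1, s2⟩
  · refine ⟨K1 + ((n+1) + (n+1)), fun z => ?_⟩
    rw [hset, Finset.sum_insert hmem1, Finset.sum_insert hmem2, Finset.sum_insert hmem3,
      Finset.sum_insert hmem4]
    have hmid : ∑ i ∈ Finset.Icc 3 (t-2), VV n (b' i * z + c' i)
        = ∑ i ∈ Finset.Icc 1 (t-4), VV n (b i * z + c i) := by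
      rw [hmap, Finset.sum_map]
      refine Finset.sum_congr rfl fun i hi => ?_
      simp only [Finset.mem_Icc] at hi
      simp only [addRightEmbedding_apply]
      rw [ebm (i+2) (by omega) (by omega), ecm (i+2) (by omega) (by omega)]
      norm_num
    rw [hmid, hK1 z, eb1, eb2, ebt1, ebt, ec1, ec2, ect1, ect]
    have hA1 := VV_A n (z + cp)
    have hA2 := VV_A n (z - cp)
    have bb1 : VV n ((-1) * z + (1 - cp)) = VV n (1 - (z + cp)) := by
      rw [show ((-1) * z + (1 - cp) : ZMod n) = 1 - (z + cp) from by ring]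
    have bb2 : VV n ((-1) * z + (1 + cp)) = VV n (1 - (z - cp)) := by
      rw [show ((-1) * z + (1 + cp) : ZMod n) = 1 - (z - cp) from by ring]
    ring_nf
    ring_nf at hA1 hA2 bb1 bb2
    omega
  · refine ⟨K2 + ((n+1) + (n+1)), fun z => ?_⟩
    rw [hset, Finset.sum_insert hmem1, Finset.sum_insert hmem2, Finset.sum_insert hmem3,
      Finset.sum_insert hmem4]
    have hmid : ∑ i ∈ Finset.Icc 3 (t-2), VV n (b' i * (z + (i:ZMod n)) + c' i)
        = ∑ i ∈ Finset.Icc 1 (t-4), VV n (b i * ((z + 2) + (i:ZMod n)) + c i) := by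
      rw [hmap, Finset.sum_map]
      refine Finset.sum_congr rfl fun i hi => ?_
      simp only [Finset.mem_Icc] at hi
      simp only [addRightEmbedding_apply]
      rw [ebm (i+2) (by omega) (by omega), ecm (i+2) (by omega) (by omega),
        show i + 2 - 2 = i from by omega]
      rw [show ((i+2 : ℕ) : ZMod n) = (i : ZMod n) + 2 from by push_cast; ring]
      rw [show (z + ((i : ZMod n) + 2)) = ((z + 2) + (i : ZMod n)) from by ring]
    rw [hmid, hK2 (z + 2), eb1, eb2, ebt1, ebt, ec1, ec2, ect1, ect]
    have hA1 := VV_A n (z + 1 + cp)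
    have hA2 := VV_A n (z + (t : ZMod n) - cp)
    have bb1 : VV n ((-1) * (z + ((t-1 : ℕ) : ZMod n)) + (1 + cp)) = VV n (1 - (z + 1 + cp)) := by
      rw [show ((-1) * (z + ((t-1 : ℕ) : ZMod n)) + (1 + cp) : ZMod n) = 1 - (z + 1 + cp) from by
        rw [Nat.cast_sub (by omega : 1 ≤ t)]; push_cast; linear_combination h2cp]
    have bb2 : VV n ((-1) * (z + ((2:ℕ) : ZMod n)) + (1 - cp)) = VV n (1 - (z + (t : ZMod n) - cp)) := by
      rw [show ((-1) * (z + ((2:ℕ) : ZMod n)) + (1 - cp) : ZMod n) = 1 - (z + (t : ZMod n) - cp)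
        from by push_cast; linear_combination -h2cp]
    have bb3 : VV n ((1 : ZMod n) * (z + ((1:ℕ) : ZMod n)) + cp) = VV n (z + 1 + cp) := by
      rw [show ((1 : ZMod n) * (z + ((1:ℕ) : ZMod n)) + cp : ZMod n) = z + 1 + cp from by
        push_cast; ring]
    have bb4 : VV n ((1 : ZMod n) * (z + (t : ZMod n)) + -cp) = VV n (z + (t : ZMod n) - cp) := by
      rw [show ((1 : ZMod n) * (z + (t : ZMod n)) + -cp : ZMod n) = z + (t : ZMod n) - cp from by
        ring]
    ring_nf
    ring_nf at hA1 hA2 bb1 bb2 bb3 bb4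
    omega

lemma coreGood (n h : ℕ) [NeZero n] (hn : n = 2*h+1) (hh : 1 ≤ h) :
    ∀ t, 3 ≤ t → ∃ b c : ℕ → ZMod n, Good n t b c := by
  intro t
  induction t using Nat.strong_induction_on with
  | _ t IH =>
    intro ht
    by_cases h6 : t ≤ 6
    · interval_cases t
      · exact base3 n h hn hh
      · exact base4 n h hn hh
      · exact base5 n h hn hh
      · exact base6 n h hn hh
    · exact stepQuad n h hn t (by omega) (IH (t-4) (by omega) (by omega))

lemma block_inj {n i j vi vj : ℕ} (h1 : 1 ≤ vi) (h2 : vi ≤ n) (h3 : 1 ≤ vj) (h4 : vj ≤ n)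
    (he : i*n + vi = j*n + vj) : i = j ∧ vi = vj := by
  rcases Nat.lt_trichotomy i j with hlt | heq | hgt
  · exfalso
    have : (i+1) * n ≤ j * n := mul_le_mul_left (by omega) n
    rw [add_mul, one_mul] at this
    omega
  · subst heq; exact ⟨rfl, by omega⟩
  · exfalso
    have : (j+1) * n ≤ i * n := mul_le_mul_left (by omega) n
    rw [add_mul, one_mul] at this
    omega

lemma cast_inj_Icc (n : ℕ) {j1 j2 : ℕ} (h1 : 1 ≤ j1) (h2 : j1 ≤ n) (h3 : 1 ≤ j2) (h4 : j2 ≤ n)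
    (h : (j1 : ZMod n) = (j2 : ZMod n)) : j1 = j2 := by
  haveI : NeZero n := ⟨by omega⟩
  have e1 := congrArg ZMod.val h
  rw [ZMod.val_natCast, ZMod.val_natCast] at e1
  rcases Nat.lt_or_ge j1 n with l1 | g1
  · rw [Nat.mod_eq_of_lt l1] at e1
    rcases Nat.lt_or_ge j2 n with l2 | g2
    · rw [Nat.mod_eq_of_lt l2] at e1; exact e1
    · have hj2 : j2 = n := by omega
      rw [hj2, Nat.mod_self] at e1; omega
  · have hj1 : j1 = n := by omega
    rw [hj1, Nat.mod_self] at e1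
    rcases Nat.lt_or_ge j2 n with l2 | g2
    · rw [Nat.mod_eq_of_lt l2] at e1; omega
    · have hj2 : j2 = n := by omega
      omega

lemma cast_rep (n : ℕ) [NeZero n] (x : ℕ) (hx : 1 ≤ x) :
    ((rep n x : ℕ) : ZMod n) = (x : ZMod n) := by
  unfold rep
  have hd := Nat.mod_add_div (x - 1) n
  have e : ((x - 1 : ℕ) : ZMod n) = (((x-1) % n : ℕ) : ZMod n) := by
    conv_lhs => rw [← hd]
    push_cast
    rw [ZMod.natCast_self]
    ring
  push_cast
  rw [← e, Nat.cast_sub hx]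
  push_cast
  ring

theorem stmt_8 (n t : ℕ) (hn : 3 ≤ n) (hodd : Odd n) (ht : 3 ≤ t) (htn : t ≤ n) (l : ℕ) :
    ∃ a : ℕ → ℕ → ℕ, IsSFD t n l a := by
  obtain ⟨h, hh⟩ := hodd
  haveI : NeZero n := ⟨by omega⟩
  obtain ⟨b, c, hu, hs, ⟨K1, hK1⟩, ⟨K2, hK2⟩⟩ := coreGood n h hh (by omega) t ht
  refine ⟨fun i j => l + (i - 1) * n + VV n (b i * (j : ZMod n) + c i), ?_, ?_, ?_, ?_⟩
  · -- image
    apply Finset.eq_of_subset_of_card_le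
    · intro x hx
      simp only [Finset.mem_image, Finset.mem_product, Finset.mem_Icc] at hx
      obtain ⟨⟨i, j⟩, ⟨⟨hi1, hi2⟩, hj1, hj2⟩, rfl⟩ := hx
      simp only [Finset.mem_Icc]
      have v1 := VV_pos n (b i * (j : ZMod n) + c i)
      have v2 := VV_le n (b i * (j : ZMod n) + c i)
      have hmul : (i - 1) * n ≤ (t - 1) * n := mul_le_mul_left (by omega) n
      have h2 : (t - 1) * n + n = t * n := by
        have h3 : n ≤ t * n := Nat.le_mul_of_pos_left n (by omega)
        rw [Nat.sub_one_mul]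
        omega
      have h4 : n * t = t * n := Nat.mul_comm n t
      omega
    · rw [Nat.card_Icc, Finset.card_image_of_injOn, Finset.card_product, Nat.card_Icc,
        Nat.card_Icc]
      · have h4 : n * t = t * n := Nat.mul_comm n t
        have e1 : t + 1 - 1 = t := by omega
        have e2 : n + 1 - 1 = n := by omega
        rw [e1, e2]
        omega
      · intro p hp q hq he
        beta_reduce at he
        simp only [Finset.coe_product, Set.mem_prod, Finset.mem_coe, Finset.mem_Icc] at hp hq
        have v1p := VV_pos n (b p.1 * (p.2 : ZMod n) + c p.1)
        have v2p := VV_le n (b p.1 * (p.2 : ZMod n) + c p.1)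
        have v1q := VV_pos n (b q.1 * (q.2 : ZMod n) + c q.1)
        have v2q := VV_le n (b q.1 * (q.2 : ZMod n) + c q.1)
        have hb := block_inj v1p v2p v1q v2q (by omega :
          (p.1 - 1)*n + VV n (b p.1 * (p.2 : ZMod n) + c p.1)
            = (q.1 - 1)*n + VV n (b q.1 * (q.2 : ZMod n) + c q.1))
        have hi : p.1 = q.1 := by omega
        have hv := VV_inj n hb.2
        rw [hi] at hv
        have hz : ((p.2 : ℕ) : ZMod n) = ((q.2 : ℕ) : ZMod n) :=
          (hu q.1 (by omega) (by omega)).mul_left_cancel (by linear_combination hv)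
        have hj : p.2 = q.2 := cast_inj_Icc n hp.2.1 hp.2.2 hq.2.1 hq.2.2 hz
        exact Prod.ext hi hj
  · -- columns
    refine ⟨(∑ i ∈ Finset.Icc 1 t, (l + (i-1)*n)) + K1, fun j hj => ?_⟩
    beta_reduce
    rw [← hK1 (j : ZMod n), ← Finset.sum_add_distrib]
  · -- diagonals
    refine ⟨(∑ i ∈ Finset.Icc 1 t, (l + (i-1)*n)) + K2, fun j hj => ?_⟩
    simp only [Finset.mem_Icc] at hj
    have hcong : ∀ i ∈ Finset.Icc 1 t,
        l + (i - 1) * n + VV n (b i * ((rep n (j + i - 1) : ℕ) : ZMod n) + c i)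
          = l + (i - 1) * n + VV n (b i * (((j : ZMod n) - 1) + (i : ZMod n)) + c i) := by
      intro i hi
      simp only [Finset.mem_Icc] at hi
      congr 3
      rw [cast_rep n _ (by omega), Nat.cast_sub (by omega : 1 ≤ j + i)]
      push_cast
      ring
    beta_reduce
    rw [Finset.sum_congr rfl hcong, ← hK2 ((j : ZMod n) - 1), ← Finset.sum_add_distrib]
  · -- symmetry
    refine ⟨2*l + (t-1)*n + (n+1), fun i hi j hj => ?_⟩
    simp only [Finset.mem_Icc] at hi hj
    obtain ⟨hbs, hcs⟩ := hs i hi.1 hi.2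
    have harg : b (t+1-i) * (((n+1-j : ℕ)) : ZMod n) + c (t+1-i)
        = 1 - (b i * (j : ZMod n) + c i) := by
      rw [hbs, Nat.cast_sub (by omega : j ≤ n + 1)]
      push_cast
      rw [ZMod.natCast_self]
      linear_combination hcs
    beta_reduce
    rw [harg]
    have hA := VV_A n (b i * (j : ZMod n) + c i)
    have hidx : (i-1)*n + ((t+1-i)-1)*n = (t-1)*n := by
      rw [← Nat.add_mul]
      congr 1
      omega
    omega
end

section
/- If M is a regular sparse magic square SMS(n,d₁) and N is a sparse anti-magic square SAMS(n,d₂), and M and N are compatible (no cell is nonzero in both), then the array obtained by adding nd₂ to each nonzero entry of M and then adding N entrywise is a sparse anti-magic square SAMS(n, d₁+d₂). -/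
/-- `A` is a sparse anti-magic square SAMS(n,d): entries lie in `{0,…,nd}`, each of
`1,…,nd` occurs exactly once, and the row sums, column sums and two main diagonal
sums form a set of `2n+2` consecutive integers. -/
def IsSAMS (n d : ℕ) (A : Fin n → Fin n → ℕ) : Prop :=
  (∀ i j, A i j ≤ n * d) ∧
  (∀ v ∈ Finset.Icc 1 (n * d), ∃! p : Fin n × Fin n, A p.1 p.2 = v) ∧
  ∃ s : ℕ,
    (Finset.univ.image fun i => ∑ j, A i j) ∪
    (Finset.univ.image fun j => ∑ i, A i j) ∪
    {∑ i, A i i, ∑ i, A i i.rev} = Finset.Icc s (s + 2 * n + 1)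

/-- each row, column and both main diagonals of `A` contain exactly `d` nonzero entries. -/
def IsRegularArray (n d : ℕ) (A : Fin n → Fin n → ℕ) : Prop :=
  (∀ i, (Finset.univ.filter fun j => A i j ≠ 0).card = d) ∧
  (∀ j, (Finset.univ.filter fun i => A i j ≠ 0).card = d) ∧
  (Finset.univ.filter fun i : Fin n => A i i ≠ 0).card = d ∧
  (Finset.univ.filter fun i : Fin n => A i i.rev ≠ 0).card = d
/-- `A` is a sparse magic square SMS(n,d): entries lie in `{0,…,nd}`, each of
`1,…,nd` occurs exactly once, and all row sums, column sums and both main diagonal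
sums are equal. -/
def IsSMS (n d : ℕ) (A : Fin n → Fin n → ℕ) : Prop :=
  (∀ i j, A i j ≤ n * d) ∧
  (∀ v ∈ Finset.Icc 1 (n * d), ∃! p : Fin n × Fin n, A p.1 p.2 = v) ∧
  ∃ s : ℕ, (∀ i, ∑ j, A i j = s) ∧ (∀ j, ∑ i, A i j = s) ∧
    (∑ i, A i i = s) ∧ (∑ i, A i i.rev = s)

private lemma sum_shift (n c : ℕ) (f : Fin n → ℕ) :
    ∑ j, (if f j = 0 then 0 else f j + c) =
      ∑ j, f j + (Finset.univ.filter fun j => f j ≠ 0).card * c := by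
  have h : ∀ j, (if f j = 0 then 0 else f j + c) = f j + (if f j = 0 then 0 else c) := by
    intro j; split <;> simp [*]
  simp_rw [h, Finset.sum_add_distrib]
  congr 1
  rw [Finset.sum_ite]
  simp [mul_comm]

theorem stmt_9 (n d₁ d₂ : ℕ) (M N : Fin n → Fin n → ℕ)
    (hM : IsSMS n d₁ M) (hMreg : IsRegularArray n d₁ M)
    (hN : IsSAMS n d₂ N)
    (hcomp : ∀ i j, M i j = 0 ∨ N i j = 0) :
    IsSAMS n (d₁ + d₂) fun i j => (if M i j = 0 then 0 else M i j + n * d₂) + N i j := by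
  obtain ⟨hMb, hMu, sM, hMrow, hMcol, hMd1, hMd2⟩ := hM
  obtain ⟨hNb, hNu, sN, hNset⟩ := hN
  obtain ⟨hRrow, hRcol, hRd1, hRd2⟩ := hMreg
  refine ⟨?_, ?_, ?_⟩
  · intro i j
    show (if M i j = 0 then 0 else M i j + n * d₂) + N i j ≤ n * (d₁ + d₂)
    by_cases h : M i j = 0
    · rw [h, if_pos rfl, zero_add]
      calc N i j ≤ n * d₂ := hNb i j
        _ ≤ n * (d₁ + d₂) := Nat.mul_le_mul_left _ (Nat.le_add_left _ _)
    · have hN0 : N i j = 0 := (hcomp i j).resolve_left h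
      rw [if_neg h, hN0, add_zero, Nat.mul_add]
      exact Nat.add_le_add_right (hMb i j) _
  · intro v hv
    simp only [Finset.mem_Icc] at hv
    by_cases hvle : v ≤ n * d₂
    · obtain ⟨p, hp, hpu⟩ := hNu v (Finset.mem_Icc.mpr ⟨hv.1, hvle⟩)
      have hMp : M p.1 p.2 = 0 := by
        rcases hcomp p.1 p.2 with h | h
        · exact h
        · omega
      refine ⟨p, ?_, ?_⟩
      · show (if M p.1 p.2 = 0 then 0 else M p.1 p.2 + n * d₂) + N p.1 p.2 = v
        rw [hMp, if_pos rfl, zero_add, hp]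
      intro q hq
      have hq : (if M q.1 q.2 = 0 then 0 else M q.1 q.2 + n * d₂) + N q.1 q.2 = v := hq
      have hMq : M q.1 q.2 = 0 := by
        by_contra hne
        rcases hcomp q.1 q.2 with h | h
        · exact hne h
        · rw [if_neg hne, h, add_zero] at hq
          have := hv.1
          omega
      rw [hMq, if_pos rfl, zero_add] at hq
      exact hpu q hq
    · have hv2 : v - n * d₂ ∈ Finset.Icc 1 (n * d₁) := by
        simp only [Finset.mem_Icc]
        have := hv.2
        rw [Nat.mul_add] at this
        omega
      obtain ⟨p, hp, hpu⟩ := hMu (v - n * d₂) hv2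
      have hMp : M p.1 p.2 ≠ 0 := by
        simp only [Finset.mem_Icc] at hv2
        omega
      have hNp : N p.1 p.2 = 0 := by
        rcases hcomp p.1 p.2 with h | h
        · exact absurd h hMp
        · exact h
      refine ⟨p, ?_, ?_⟩
      · show (if M p.1 p.2 = 0 then 0 else M p.1 p.2 + n * d₂) + N p.1 p.2 = v
        rw [if_neg hMp, hNp, add_zero, hp]
        omega
      intro q hq
      have hq : (if M q.1 q.2 = 0 then 0 else M q.1 q.2 + n * d₂) + N q.1 q.2 = v := hq
      have hMq : M q.1 q.2 ≠ 0 := by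
        intro h0
        rw [h0, if_pos rfl, zero_add] at hq
        have := hNb q.1 q.2
        omega
      have hNq : N q.1 q.2 = 0 := by
        rcases hcomp q.1 q.2 with h | h
        · exact absurd h hMq
        · exact h
      rw [if_neg hMq, hNq, add_zero] at hq
      exact hpu q (by omega)
  · refine ⟨sN + (sM + d₁ * (n * d₂)), ?_⟩
    set c := sM + d₁ * (n * d₂) with hc
    have hrow : ∀ i, (∑ j, ((if M i j = 0 then 0 else M i j + n * d₂) + N i j))
        = (∑ j, N i j) + c := by
      intro i
      rw [Finset.sum_add_distrib, sum_shift, hRrow, hMrow]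
      ring
    have hcol : ∀ j, (∑ i, ((if M i j = 0 then 0 else M i j + n * d₂) + N i j))
        = (∑ i, N i j) + c := by
      intro j
      rw [Finset.sum_add_distrib, sum_shift, hRcol, hMcol]
      ring
    have hd1 : (∑ i, ((if M i i = 0 then 0 else M i i + n * d₂) + N i i))
        = (∑ i, N i i) + c := by
      rw [Finset.sum_add_distrib, sum_shift, hRd1, hMd1]
      ring
    have hd2 : (∑ i, ((if M i i.rev = 0 then 0 else M i i.rev + n * d₂) + N i i.rev))
        = (∑ i, N i i.rev) + c := by
      rw [Finset.sum_add_distrib, sum_shift, hRd2, hMd2]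
      ring
    simp only [hrow, hcol, hd1, hd2]
    have himg : ∀ f : Fin n → ℕ,
        (Finset.univ.image fun i => f i + c) = (Finset.univ.image f).image (· + c) := by
      intro f
      rw [Finset.image_image]
      rfl
    rw [himg, himg]
    have : ({(∑ i, N i i) + c, (∑ i, N i i.rev) + c} : Finset ℕ)
        = ({∑ i, N i i, ∑ i, N i i.rev} : Finset ℕ).image (· + c) := by
      simp [Finset.image_insert]
    rw [this, ← Finset.image_union, ← Finset.image_union, hNset,
      Finset.image_add_right_Icc]
    congr 1
    ring
end

section
/- If there exists a regular SMS(n,d₁) and a regular SAMS(n,d₂) that are compatible, then there exists a regular SAMS(n, d₁+d₂). -/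
lemma line_sum {k : ℕ} (m nn : Fin k → ℕ) (c : ℕ) :
    ∑ j, (m j + nn j + if nn j = 0 then 0 else c) =
      ∑ j, m j + ∑ j, nn j + (Finset.univ.filter fun j => nn j ≠ 0).card * c := by
  rw [Finset.sum_add_distrib, Finset.sum_add_distrib]
  congr 1
  rw [Finset.sum_ite, Finset.sum_const, Finset.sum_const]
  simp [mul_comm]

lemma card_filter_or {k : ℕ} (p q : Fin k → Prop) [DecidablePred p] [DecidablePred q]
    (h : ∀ a, ¬(p a ∧ q a)) :
    (Finset.univ.filter fun a => p a ∨ q a).card =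
      (Finset.univ.filter p).card + (Finset.univ.filter q).card := by
  rw [Finset.filter_or, Finset.card_union_of_disjoint]
  rw [Finset.disjoint_filter]
  intro a _ hp hq
  exact h a ⟨hp, hq⟩



theorem stmt_10 (n d₁ d₂ : ℕ) (M N : Fin n → Fin n → ℕ)
    (hM : IsSMS n d₁ M) (hMreg : IsRegularArray n d₁ M)
    (hN : IsSAMS n d₂ N) (hNreg : IsRegularArray n d₂ N)
    (hcomp : ∀ i j, M i j = 0 ∨ N i j = 0) :
    ∃ A : Fin n → Fin n → ℕ, IsSAMS n (d₁ + d₂) A ∧ IsRegularArray n (d₁ + d₂) A := by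
  classical
  obtain ⟨hMle, hMuniq, sM, hMrow, hMcol, hMd1, hMd2⟩ := hM
  obtain ⟨hMr, hMc, hMdd1, hMdd2⟩ := hMreg
  obtain ⟨hNle, hNuniq, sN, hNset⟩ := hN
  obtain ⟨hNr, hNc, hNdd1, hNdd2⟩ := hNreg
  set A : Fin n → Fin n → ℕ :=
    fun i j => M i j + N i j + if N i j = 0 then 0 else n * d₁ with hA
  set C : ℕ := sM + d₂ * (n * d₁) with hC
  have hrow : ∀ i, ∑ j, A i j = (∑ j, N i j) + C := by
    intro i
    simp only [hA]
    rw [line_sum (fun j => M i j) (fun j => N i j) (n * d₁), hMrow i, hNr i, hC]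
    ring
  have hcol : ∀ j, ∑ i, A i j = (∑ i, N i j) + C := by
    intro j
    simp only [hA]
    rw [line_sum (fun i => M i j) (fun i => N i j) (n * d₁), hMcol j, hNc j, hC]
    ring
  have hdia : ∑ i, A i i = (∑ i, N i i) + C := by
    simp only [hA]
    rw [line_sum (fun i => M i i) (fun i => N i i) (n * d₁), hMd1, hNdd1, hC]
    ring
  have hadia : ∑ i, A i i.rev = (∑ i, N i i.rev) + C := by
    simp only [hA]
    rw [line_sum (fun i => M i i.rev) (fun i => N i i.rev) (n * d₁), hMd2, hNdd2, hC]
    ring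
  have hAne : ∀ i j, (A i j ≠ 0 ↔ (M i j ≠ 0 ∨ N i j ≠ 0)) := by
    intro i j
    by_cases h0 : N i j = 0
    · simp [hA, h0]
    · simp only [hA, if_neg h0]
      constructor
      · intro _; exact Or.inr h0
      · intro _; omega
  have hdisj : ∀ i j, ¬(M i j ≠ 0 ∧ N i j ≠ 0) := by
    intro i j h
    rcases hcomp i j with h'|h'
    · exact h.1 h'
    · exact h.2 h'
  refine ⟨A, ⟨?_, ?_, ?_⟩, ?_, ?_, ?_, ?_⟩
  · -- bounds
    intro i j
    have h1 := hMle i j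
    have h2 := hNle i j
    by_cases h0 : N i j = 0
    · simp only [hA]
      rw [h0, if_pos rfl]
      nlinarith
    · have hM0 : M i j = 0 := (hcomp i j).resolve_right h0
      simp only [hA, hM0, if_neg h0]
      nlinarith
  · -- uniqueness
    intro v hv
    simp only [Finset.mem_Icc] at hv
    have hsplit : n * (d₁ + d₂) = n * d₁ + n * d₂ := by ring
    by_cases hvle : v ≤ n * d₁
    · obtain ⟨p, hp, hpuniq⟩ := hMuniq v (Finset.mem_Icc.mpr ⟨hv.1, hvle⟩)
      have hMp : M p.1 p.2 ≠ 0 := by omega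
      have hNp : N p.1 p.2 = 0 := (hcomp p.1 p.2).resolve_left hMp
      refine ⟨p, ?_, ?_⟩
      · simp [hA, hNp, hp]
      · intro q hq
        have hNq : N q.1 q.2 = 0 := by
          by_contra h0
          simp only [hA, if_neg h0] at hq
          have : 1 ≤ N q.1 q.2 := Nat.one_le_iff_ne_zero.mpr h0
          omega
        apply hpuniq
        simpa [hA, hNq] using hq
    · have hvm : v - n * d₁ ∈ Finset.Icc 1 (n * d₂) := by
        rw [Finset.mem_Icc]
        omega
      obtain ⟨p, hp, hpuniq⟩ := hNuniq (v - n * d₁) hvm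
      have hNp : N p.1 p.2 ≠ 0 := by
        rw [Finset.mem_Icc] at hvm
        omega
      have hMp : M p.1 p.2 = 0 := (hcomp p.1 p.2).resolve_right hNp
      refine ⟨p, ?_, ?_⟩
      · simp only [hA, hMp, if_neg hNp]
        rw [Finset.mem_Icc] at hvm
        omega
      · intro q hq
        have hNq : N q.1 q.2 ≠ 0 := by
          intro h0
          simp [hA, h0] at hq
          have := hMle q.1 q.2
          omega
        apply hpuniq
        simp only [hA, if_neg hNq] at hq
        have hMq : M q.1 q.2 = 0 := (hcomp q.1 q.2).resolve_right hNq
        omega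
  · -- consecutive sums
    refine ⟨sN + C, ?_⟩
    have e1 : (fun i => ∑ j, A i j) = fun i => (∑ j, N i j) + C := funext hrow
    have e2 : (fun j => ∑ i, A i j) = fun j => (∑ i, N i j) + C := funext hcol
    rw [e1, e2, hdia, hadia]
    have himg : (Finset.univ.image fun i => (∑ j, N i j) + C) ∪
        (Finset.univ.image fun j => (∑ i, N i j) + C) ∪
        {(∑ i, N i i) + C, (∑ i, N i i.rev) + C} =
        ((Finset.univ.image fun i => ∑ j, N i j) ∪
         (Finset.univ.image fun j => ∑ i, N i j) ∪
         {∑ i, N i i, ∑ i, N i i.rev}).image (· + C) := by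
      rw [Finset.image_union, Finset.image_union, Finset.image_image, Finset.image_image]
      simp [Function.comp_def]
    rw [himg, hNset, Finset.image_add_right_Icc]
    congr 1
    omega
  · -- row regularity
    intro i
    have hfe : (Finset.univ.filter fun j => A i j ≠ 0) =
        Finset.univ.filter fun j => (M i j ≠ 0 ∨ N i j ≠ 0) :=
      Finset.filter_congr fun j _ => by simp [hAne]
    rw [hfe, card_filter_or _ _ (fun j => hdisj i j), hMr i, hNr i]
  · -- col regularity
    intro j
    have hfe : (Finset.univ.filter fun i => A i j ≠ 0) =
        Finset.univ.filter fun i => (M i j ≠ 0 ∨ N i j ≠ 0) :=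
      Finset.filter_congr fun i _ => by simp [hAne]
    rw [hfe, card_filter_or _ _ (fun i => hdisj i j), hMc j, hNc j]
  · have hfe : (Finset.univ.filter fun i : Fin n => A i i ≠ 0) =
        Finset.univ.filter fun i : Fin n => (M i i ≠ 0 ∨ N i i ≠ 0) :=
      Finset.filter_congr fun i _ => by simp [hAne]
    rw [hfe, card_filter_or _ _ (fun i => hdisj i i), hMdd1, hNdd1]
  · have hfe : (Finset.univ.filter fun i : Fin n => A i i.rev ≠ 0) =
        Finset.univ.filter fun i : Fin n => (M i i.rev ≠ 0 ∨ N i i.rev ≠ 0) :=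
      Finset.filter_congr fun i _ => by simp [hAne]
    rw [hfe, card_filter_or _ _ (fun i => hdisj i i.rev), hMdd2, hNdd2]
end

section
/- Let n = 2m+1 ≥ 7 with n ≡ 1 or 5 (mod 6), and define the 4×n array A by: a_{1,j} = 2n + (j+1)/2 for odd j, a_{1,j} = 2n + m + 1 + j/2 for even j; a_{2,j} = n + 2 - j; a_{3,1} = 1, a_{3,j} = n + (j+1)/2 for odd j ≥ 3, a_{3,j} = n + m + 1 + j/2 for even j; a_{4,j} = 4n + 1 - j. Then the set of all entries of A is exactly {1, 2, ..., 4n}. -/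
theorem stmt_13 (m n : ℕ) (hm : 3 ≤ m) (hn : n = 2 * m + 1)
    (h6 : n % 6 = 1 ∨ n % 6 = 5)
    (a : ℕ → ℕ → ℕ)
    (h1o : ∀ j ∈ Finset.Icc 1 n, Odd j → a 1 j = 2 * n + (j + 1) / 2)
    (h1e : ∀ j ∈ Finset.Icc 1 n, Even j → a 1 j = 2 * n + m + 1 + j / 2)
    (h2 : ∀ j ∈ Finset.Icc 1 n, a 2 j = n + 2 - j)
    (h31 : a 3 1 = 1)
    (h3o : ∀ j ∈ Finset.Icc 1 n, Odd j → 3 ≤ j → a 3 j = n + (j + 1) / 2)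
    (h3e : ∀ j ∈ Finset.Icc 1 n, Even j → a 3 j = n + m + 1 + j / 2)
    (h4 : ∀ j ∈ Finset.Icc 1 n, a 4 j = 4 * n + 1 - j) :
    ((Finset.Icc 1 4 ×ˢ Finset.Icc 1 n).image fun p => a p.1 p.2) =
      Finset.Icc 1 (4 * n) := by
  subst hn
  ext k
  simp only [Finset.mem_image, Finset.mem_product, Finset.mem_Icc, Prod.exists]
  constructor
  · rintro ⟨i, j, ⟨⟨hi1, hi4⟩, hj1, hjn⟩, rfl⟩
    have hmem : j ∈ Finset.Icc 1 (2 * m + 1) := Finset.mem_Icc.mpr ⟨hj1, hjn⟩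
    interval_cases i
    · rcases Nat.even_or_odd j with he | ho
      · rw [h1e j hmem he]; rw [Nat.even_iff] at he; omega
      · rw [h1o j hmem ho]; rw [Nat.odd_iff] at ho; omega
    · rw [h2 j hmem]; omega
    · rcases Nat.even_or_odd j with he | ho
      · rw [h3e j hmem he]; rw [Nat.even_iff] at he; omega
      · rw [Nat.odd_iff] at ho
        by_cases h3 : 3 ≤ j
        · rw [h3o j hmem (Nat.odd_iff.mpr ho) h3]; omega
        · have hj : j = 1 := by omega
          subst hj; rw [h31]; omega
    · rw [h4 j hmem]; omega
  · rintro ⟨hk1, hk4⟩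
    have hcase : k = 1 ∨ (2 ≤ k ∧ k ≤ 2*m+2) ∨ (2*m+3 ≤ k ∧ k ≤ 3*m+2) ∨
        (3*m+3 ≤ k ∧ k ≤ 4*m+2) ∨ (4*m+3 ≤ k ∧ k ≤ 5*m+3) ∨
        (5*m+4 ≤ k ∧ k ≤ 6*m+3) ∨ (6*m+4 ≤ k ∧ k ≤ 8*m+4) := by omega
    rcases hcase with h | h | h | h | h | h | h
    · exact ⟨3, 1, ⟨⟨by omega, by omega⟩, by omega, by omega⟩, by rw [h31]; omega⟩
    · refine ⟨2, 2*m+3-k, ⟨⟨by omega, by omega⟩, by omega, by omega⟩, ?_⟩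
      rw [h2 _ (Finset.mem_Icc.mpr ⟨by omega, by omega⟩)]; omega
    · refine ⟨3, 2*k-4*m-3, ⟨⟨by omega, by omega⟩, by omega, by omega⟩, ?_⟩
      rw [h3o _ (Finset.mem_Icc.mpr ⟨by omega, by omega⟩)
        (Nat.odd_iff.mpr (by omega)) (by omega)]; omega
    · refine ⟨3, 2*k-6*m-4, ⟨⟨by omega, by omega⟩, by omega, by omega⟩, ?_⟩
      rw [h3e _ (Finset.mem_Icc.mpr ⟨by omega, by omega⟩)
        (Nat.even_iff.mpr (by omega))]; omega
    · refine ⟨1, 2*k-8*m-5, ⟨⟨by omega, by omega⟩, by omega, by omega⟩, ?_⟩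
      rw [h1o _ (Finset.mem_Icc.mpr ⟨by omega, by omega⟩)
        (Nat.odd_iff.mpr (by omega))]; omega
    · refine ⟨1, 2*k-10*m-6, ⟨⟨by omega, by omega⟩, by omega, by omega⟩, ?_⟩
      rw [h1e _ (Finset.mem_Icc.mpr ⟨by omega, by omega⟩)
        (Nat.even_iff.mpr (by omega))]; omega
    · refine ⟨4, 8*m+5-k, ⟨⟨by omega, by omega⟩, by omega, by omega⟩, ?_⟩
      rw [h4 _ (Finset.mem_Icc.mpr ⟨by omega, by omega⟩)]; omega
end

section
/- Let n = 2m+1 ≥ 7 with n ≡ 1 or 5 (mod 6), and let A be the 4×n array with a_{1,j} = 2n+(j+1)/2 (j odd), 2n+m+1+j/2 (j even); a_{2,j} = n+2-j; a_{3,1}=1, a_{3,j} = n+(j+1)/2 (j odd, j≥3), n+m+1+j/2 (j even); a_{4,j} = 4n+1-j. Then the union of the set of column sums {∑_{i=1}^4 a_{i,j} : j ∈ [1,n]} and the set of forward diagonal sums {a_{1,j} + a_{2,⟨j+1⟩_n} + a_{3,⟨j+2⟩_n} + a_{4,⟨j+3⟩_n} : j ∈ [1,n]} equals [7n+2, 9n+2]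 \ {8n+2}. -/
lemma rep_small {n a : ℕ} (h1 : 1 ≤ a) (h2 : a ≤ n) : rep n a = a := by
  unfold rep
  rw [Nat.mod_eq_of_lt (by omega)]
  omega

lemma rep_big {n a : ℕ} (h1 : n + 1 ≤ a) (h2 : a ≤ 2 * n) : rep n a = a - n := by
  unfold rep
  rw [Nat.mod_eq_sub_mod (by omega), Nat.mod_eq_of_lt (by omega)]
  omega

theorem stmt_14 (m n : ℕ) (hm : 3 ≤ m) (hn : n = 2 * m + 1)
    (h6 : n % 6 = 1 ∨ n % 6 = 5)
    (a : ℕ → ℕ → ℕ)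
    (h1o : ∀ j ∈ Finset.Icc 1 n, Odd j → a 1 j = 2 * n + (j + 1) / 2)
    (h1e : ∀ j ∈ Finset.Icc 1 n, Even j → a 1 j = 2 * n + m + 1 + j / 2)
    (h2 : ∀ j ∈ Finset.Icc 1 n, a 2 j = n + 2 - j)
    (h31 : a 3 1 = 1)
    (h3o : ∀ j ∈ Finset.Icc 1 n, Odd j → 3 ≤ j → a 3 j = n + (j + 1) / 2)
    (h3e : ∀ j ∈ Finset.Icc 1 n, Even j → a 3 j = n + m + 1 + j / 2)
    (h4 : ∀ j ∈ Finset.Icc 1 n, a 4 j = 4 * n + 1 - j) :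
    ((Finset.Icc 1 n).image fun j => ∑ i ∈ Finset.Icc 1 4, a i j) ∪
      ((Finset.Icc 1 n).image fun j =>
        a 1 j + a 2 (rep n (j + 1)) + a 3 (rep n (j + 2)) + a 4 (rep n (j + 3))) =
      Finset.Icc (7 * n + 2) (9 * n + 2) \ {8 * n + 2} := by
  have hn7 : 7 ≤ n := by omega
  have hn2 : n % 2 = 1 := by omega
  have mem : ∀ k : ℕ, 1 ≤ k → k ≤ n → k ∈ Finset.Icc 1 n := fun k a b =>
    Finset.mem_Icc.mpr ⟨a, b⟩
  have hsum : ∀ j, ∑ i ∈ Finset.Icc 1 4, a i j = a 1 j + a 2 j + a 3 j + a 4 j := by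
    intro j
    rw [show (Finset.Icc 1 4 : Finset ℕ) = {1,2,3,4} from by decide]
    simp [Finset.sum_insert, Finset.mem_insert]
    ring
  have hcol : ∀ j, 1 ≤ j → j ≤ n → (∑ i ∈ Finset.Icc 1 4, a i j) =
      if j = 1 then 7 * n + 3 else if j % 2 = 1 then 8 * n + 4 - j else 9 * n + 4 - j := by
    intro j hj1 hj2
    rw [hsum]
    by_cases e1 : j = 1
    · subst e1
      rw [h1o 1 (mem 1 (by omega) (by omega)) (by decide), h2 1 (mem 1 (by omega) (by omega)),
        h31, h4 1 (mem 1 (by omega) (by omega))]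
      split_ifs <;> omega
    · by_cases hp : j % 2 = 1
      · rw [h1o j (mem j hj1 hj2) (Nat.odd_iff.mpr hp), h2 j (mem j hj1 hj2),
          h3o j (mem j hj1 hj2) (Nat.odd_iff.mpr hp) (by omega), h4 j (mem j hj1 hj2)]
        rw [if_neg e1, if_pos hp]
        omega
      · rw [h1e j (mem j hj1 hj2) (Nat.even_iff.mpr (by omega)), h2 j (mem j hj1 hj2),
          h3e j (mem j hj1 hj2) (Nat.even_iff.mpr (by omega)), h4 j (mem j hj1 hj2)]
        rw [if_neg e1, if_neg hp]
        omega
  have hdiag : ∀ j, 1 ≤ j → j ≤ n →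
      a 1 j + a 2 (rep n (j + 1)) + a 3 (rep n (j + 2)) + a 4 (rep n (j + 3)) =
      if j = n - 2 then 8 * n + 3 else if j = n - 1 then 7 * n + 2 else if j = n then 9 * n + 1
      else if j % 2 = 1 then 8 * n + 1 - j else 9 * n + 1 - j := by
    intro j hj1 hj2
    by_cases e2 : j = n - 2
    · rw [if_pos e2]
      rw [rep_small (a := j + 1) (by omega) (by omega),
        rep_small (a := j + 2) (by omega) (by omega),
        rep_big (a := j + 3) (by omega) (by omega),
        show j + 3 - n = 1 from by omega]
      rw [h1o j (mem j hj1 hj2) (Nat.odd_iff.mpr (by omega)),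
        h2 (j + 1) (mem _ (by omega) (by omega)),
        h3o (j + 2) (mem _ (by omega) (by omega)) (Nat.odd_iff.mpr (by omega)) (by omega),
        h4 1 (mem 1 (by omega) (by omega))]
      omega
    · by_cases e1 : j = n - 1
      · rw [if_neg e2, if_pos e1]
        rw [rep_small (a := j + 1) (by omega) (by omega),
          rep_big (a := j + 2) (by omega) (by omega), show j + 2 - n = 1 from by omega,
          rep_big (a := j + 3) (by omega) (by omega), show j + 3 - n = 2 from by omega]
        rw [h1e j (mem j hj1 hj2) (Nat.even_iff.mpr (by omega)),
          h2 (j + 1) (mem _ (by omega) (by omega)), h31,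
          h4 2 (mem 2 (by omega) (by omega))]
        omega
      · by_cases e0 : j = n
        · rw [if_neg e2, if_neg e1, if_pos e0]
          rw [rep_big (a := j + 1) (by omega) (by omega), show j + 1 - n = 1 from by omega,
            rep_big (a := j + 2) (by omega) (by omega), show j + 2 - n = 2 from by omega,
            rep_big (a := j + 3) (by omega) (by omega), show j + 3 - n = 3 from by omega]
          rw [h1o j (mem j hj1 hj2) (Nat.odd_iff.mpr (by omega)),
            h2 1 (mem 1 (by omega) (by omega)),
            h3e 2 (mem 2 (by omega) (by omega)) (by decide),
            h4 3 (mem 3 (by omega) (by omega))]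
          omega
        · have hj3 : j ≤ n - 3 := by
            rcases Nat.even_or_odd j with he | ho
            · have := Nat.even_iff.mp he; omega
            · have := Nat.odd_iff.mp ho; omega
          rw [if_neg e2, if_neg e1, if_neg e0]
          rw [rep_small (a := j + 1) (by omega) (by omega),
            rep_small (a := j + 2) (by omega) (by omega),
            rep_small (a := j + 3) (by omega) (by omega)]
          by_cases hp : j % 2 = 1
          · rw [h1o j (mem j hj1 hj2) (Nat.odd_iff.mpr hp),
              h2 (j + 1) (mem _ (by omega) (by omega)),
              h3o (j + 2) (mem _ (by omega) (by omega)) (Nat.odd_iff.mpr (by omega)) (by omega),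
              h4 (j + 3) (mem _ (by omega) (by omega))]
            rw [if_pos hp]
            omega
          · rw [h1e j (mem j hj1 hj2) (Nat.even_iff.mpr (by omega)),
              h2 (j + 1) (mem _ (by omega) (by omega)),
              h3e (j + 2) (mem _ (by omega) (by omega)) (Nat.even_iff.mpr (by omega)),
              h4 (j + 3) (mem _ (by omega) (by omega))]
            rw [if_neg hp]
            omega
  ext x
  simp only [Finset.mem_union, Finset.mem_image, Finset.mem_sdiff, Finset.mem_Icc,
    Finset.mem_singleton]
  constructor
  · rintro (⟨j, hj, rfl⟩ | ⟨j, hj, rfl⟩)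
    · rw [hcol j hj.1 hj.2]
      split_ifs with i1 i2 <;> refine ⟨⟨by omega, by omega⟩, by omega⟩
    · rw [hdiag j hj.1 hj.2]
      split_ifs with i1 i2 i3 i4 <;> refine ⟨⟨by omega, by omega⟩, by omega⟩
  · rintro ⟨⟨hx1, hx2⟩, hx3⟩
    by_cases c0 : x = 7 * n + 3
    · exact Or.inl ⟨1, ⟨by omega, by omega⟩, by rw [hcol 1 (by omega) (by omega)]; split_ifs <;> omega⟩
    · by_cases cp : x % 2 = 1
      · by_cases c1 : x ≤ 8 * n + 1
        · by_cases c2 : x = 7 * n + 2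
          · refine Or.inr ⟨n - 1, ⟨by omega, by omega⟩, ?_⟩
            rw [hdiag (n - 1) (by omega) (by omega)]
            split_ifs <;> omega
          · refine Or.inl ⟨8 * n + 4 - x, ⟨by omega, by omega⟩, ?_⟩
            rw [hcol (8 * n + 4 - x) (by omega) (by omega)]
            split_ifs <;> omega
        · by_cases c2 : x = 8 * n + 3
          · refine Or.inr ⟨n - 2, ⟨by omega, by omega⟩, ?_⟩
            rw [hdiag (n - 2) (by omega) (by omega)]
            split_ifs <;> omega
          · refine Or.inl ⟨9 * n + 4 - x, ⟨by omega, by omega⟩, ?_⟩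
            rw [hcol (9 * n + 4 - x) (by omega) (by omega)]
            split_ifs <;> omega
      · by_cases c1 : x = 9 * n + 1
        · refine Or.inr ⟨n, ⟨by omega, by omega⟩, ?_⟩
          rw [hdiag n (by omega) (by omega)]
          split_ifs <;> omega
        · by_cases c2 : x ≤ 8 * n
          · refine Or.inr ⟨8 * n + 1 - x, ⟨by omega, by omega⟩, ?_⟩
            rw [hdiag (8 * n + 1 - x) (by omega) (by omega)]
            split_ifs <;> omega
          · refine Or.inr ⟨9 * n + 1 - x, ⟨by omega, by omega⟩, ?_⟩
            rw [hdiag (9 * n + 1 - x) (by omega) (by omega)]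
            split_ifs <;> omega
end
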